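/- arXiv:1311.1800 — 9 statements merged into one kernel-verified Lean document; each statement's English description precedes it below -/
import Mathlib

section
/- Let σ ⊆ N_ℚ be a strongly convex polyhedral cone and Δ₁, Δ₂ two σ-polyhedra in N_ℚ. Then Δ₁ = Δ₂ if and only if h_{Δ₁}(m) = h_{Δ₂}(m) for every lattice point m in the relative interior of σ^∨. -/
open scoped Pointwise

/-- The standard pairing between `M_ℚ` and `N_ℚ`, both identified with `Fin n → ℚ`. -/
def pairQ {n : ℕ} (m v : Fin n → ℚ) : ℚ := ∑ i, m i * v i

/-- The conical hull (set of nonnegative rational combinations) of a set. -/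
def coneHull {n : ℕ} (S : Set (Fin n → ℚ)) : Set (Fin n → ℚ) :=
  {v | ∃ (T : Finset (Fin n → ℚ)) (c : (Fin n → ℚ) → ℚ),
      ↑T ⊆ S ∧ (∀ x ∈ T, 0 ≤ c x) ∧ v = ∑ x ∈ T, c x • x}

/-- A polyhedral cone is the conical hull of a finite set. -/
def IsPolyhedralCone {n : ℕ} (σ : Set (Fin n → ℚ)) : Prop :=
  ∃ S : Finset (Fin n → ℚ), σ = coneHull ↑S

/-- A cone is strongly convex (pointed) if it contains no line. -/
def IsStronglyConvex {n : ℕ} (σ : Set (Fin n → ℚ)) : Prop :=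
  ∀ v ∈ σ, -v ∈ σ → v = 0

/-- The dual cone `σ^∨ ⊆ M_ℚ` of a cone `σ ⊆ N_ℚ`. -/
def dualCone {n : ℕ} (σ : Set (Fin n → ℚ)) : Set (Fin n → ℚ) :=
  {m | ∀ v ∈ σ, 0 ≤ pairQ m v}

/-- A `σ`-polyhedron: Minkowski sum of a (nonempty) polytope with the cone `σ`. -/
def IsSigmaPolyhedron {n : ℕ} (σ Δ : Set (Fin n → ℚ)) : Prop :=
  ∃ Q : Finset (Fin n → ℚ), Q.Nonempty ∧ Δ = convexHull ℚ ↑Q + σ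

/-- The relative interior of a convex set, characterized via the stretching property. -/
def relint {n : ℕ} (C : Set (Fin n → ℚ)) : Set (Fin n → ℚ) :=
  {x | x ∈ C ∧ ∀ y ∈ C, ∃ t : ℚ, 1 < t ∧ y + t • (x - y) ∈ C}

/-!
If the support functions agree on the lattice points of `relint σ^∨`, then by positive homogeneity
they agree at every rational `m` that is strictly positive on `σ \ {0}`. Write
`Δᵢ = conv Qᵢ + σ` and suppose `v ∈ Δ₁ \ Δ₂`. Farkas' lemma gives `m ∈ σ^∨` and `t` with
`⟨m, v⟩ < t ≤ ⟨m, q⟩` for `q ∈ Q₂`, and strong convexity of `σ` gives `m₀` strictly positive on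
`σ \ {0}`. For large `N` this contradicts
`h_{Δ₁}(N m + m₀) ≤ N ⟨m, v⟩ + ⟨m₀, v⟩ < N t + min_{q ∈ Q₂} ⟨m₀, q⟩ ≤ h_{Δ₂}(N m + m₀)`.
Farkas' lemma itself is proved over any ordered field by Bartl's induction on the number of
inequalities.
-/

section Farkas

variable {K V ι : Type*}

lemma exists_nonneg_sum_insert [Semiring K] [PartialOrder K] [AddCommMonoid V] [Module K V]
    [DecidableEq ι] {s : Finset ι} {j : ι} (hj : j ∉ s) (a : ι → V) {y : ι → K}
    (hy : ∀ i ∈ s, 0 ≤ y i) {t : K} (ht : 0 ≤ t) :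
    ∃ y' : ι → K, (∀ i ∈ insert j s, 0 ≤ y' i) ∧
      ∑ i ∈ insert j s, y' i • a i = t • a j + ∑ i ∈ s, y i • a i := by
  have hne : ∀ i ∈ s, i ≠ j := fun i hi h => hj (h ▸ hi)
  refine ⟨Function.update y j t,
    Finset.forall_mem_insert _ _ _ |>.2 ⟨by simpa, fun i hi => ?_⟩, ?_⟩
  · rw [Function.update_of_ne (hne i hi)]
    exact hy i hi
  · rw [Finset.sum_insert hj, Function.update_self]
    congr 1
    exact Finset.sum_congr rfl fun i hi => by rw [Function.update_of_ne (hne i hi)]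

variable [Field K] [AddCommGroup V] [Module K V]

def projKerAlong (g : Module.Dual K V) (x : V) : V →ₗ[K] V :=
  LinearMap.id - (g x)⁻¹ • g.smulRight x

lemma apply_eq_apply_projKerAlong_add (f g : Module.Dual K V) (x z : V) :
    f z = f (projKerAlong g x z) + g z / g x * f x := by
  simp [projKerAlong, div_eq_inv_mul, mul_assoc]

lemma apply_projKerAlong_eq_zero {g : Module.Dual K V} {x : V} (hx : g x ≠ 0) (z : V) :
    g (projKerAlong g x z) = 0 := by
  have := apply_eq_apply_projKerAlong_add g g x z
  rw [div_mul_cancel₀ _ hx] at this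
  linear_combination -this

lemma eq_smul_add_sum_of_comp_projKerAlong {g c : Module.Dual K V} {x : V} (hx : g x ≠ 0)
    (s : Finset ι) (a : ι → Module.Dual K V) (y : ι → K)
    (h : c ∘ₗ projKerAlong g x = ∑ i ∈ s, y i • (a i ∘ₗ projKerAlong g x)) :
    c = ((c x - ∑ i ∈ s, y i * a i x) / g x) • g + ∑ i ∈ s, y i • a i := by
  ext z
  have hz := LinearMap.congr_fun h z
  simp only [LinearMap.comp_apply, LinearMap.coe_sum, LinearMap.coe_smul, Finset.sum_apply,
    Pi.smul_apply, smul_eq_mul] at hz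
  have hsum : ∑ i ∈ s, y i * a i z
      = ∑ i ∈ s, y i * a i (projKerAlong g x z) + g z / g x * ∑ i ∈ s, y i * a i x := by
    simp only [Finset.mul_sum, ← Finset.sum_add_distrib]
    exact Finset.sum_congr rfl fun i _ => by rw [apply_eq_apply_projKerAlong_add (a i) g x z]; ring
  simp only [LinearMap.add_apply, LinearMap.coe_sum, LinearMap.coe_smul, Finset.sum_apply,
    Pi.smul_apply, smul_eq_mul]
  rw [hsum, apply_eq_apply_projKerAlong_add c g x z, hz]
  field_simp
  ring

theorem farkas_alternative [LinearOrder K] [IsStrictOrderedRing K] (s : Finset ι)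
    (a : ι → Module.Dual K V) (c : Module.Dual K V) :
    (∃ y : ι → K, (∀ i ∈ s, 0 ≤ y i) ∧ c = ∑ i ∈ s, y i • a i) ∨
      ∃ x, (∀ i ∈ s, 0 ≤ a i x) ∧ c x < 0 := by
  classical
  induction s using Finset.induction_on generalizing a c with
  | empty =>
    by_cases hc : c = 0
    · exact .inl ⟨0, by simp, by simp [hc]⟩
    obtain ⟨x, hx⟩ : ∃ x, c x ≠ 0 := by
      by_contra! h
      exact hc (LinearMap.ext h)
    rcases hx.lt_or_gt with hx | hx
    · exact .inr ⟨x, by simp, hx⟩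
    · exact .inr ⟨-x, by simp, by simpa using hx⟩
  | insert j s hj ih =>
    rcases ih a c with ⟨y, hy, hc⟩ | ⟨x, hx, hcx⟩
    · obtain ⟨y', hy', hsum⟩ := exists_nonneg_sum_insert hj a hy le_rfl
      exact .inl ⟨y', hy', by rw [hsum, zero_smul, zero_add, hc]⟩
    rcases le_or_gt 0 (a j x) with hjx | hjx
    · exact .inr ⟨x, Finset.forall_mem_insert _ _ _ |>.2 ⟨hjx, hx⟩, hcx⟩
    -- Solve the system restricted to `ker (a j)`, where the constraint `a j ≥ 0` is automatic.
    rcases ih (fun i => a i ∘ₗ projKerAlong (a j) x) (c ∘ₗ projKerAlong (a j) x) with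
      ⟨y, hy, hc⟩ | ⟨z, hz, hcz⟩
    · have ht : 0 ≤ (c x - ∑ i ∈ s, y i * a i x) / a j x := by
        apply div_nonneg_of_nonpos _ hjx.le
        linarith [Finset.sum_nonneg fun i hi => mul_nonneg (hy i hi) (hx i hi)]
      obtain ⟨y', hy', hsum⟩ := exists_nonneg_sum_insert hj a hy ht
      exact .inl ⟨y', hy', by rw [hsum, ← eq_smul_add_sum_of_comp_projKerAlong hjx.ne s a y hc]⟩
    · exact .inr ⟨projKerAlong (a j) x z, Finset.forall_mem_insert _ _ _ |>.2
        ⟨(apply_projKerAlong_eq_zero hjx.ne z).ge, hz⟩, hcz⟩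

end Farkas

section Cones

variable {n : ℕ}

open Matrix Filter Topology

lemma pairQ_eq_dotProduct (m v : Fin n → ℚ) : pairQ m v = m ⬝ᵥ v := rfl

@[simp] lemma pairQ_zero_right (m : Fin n → ℚ) : pairQ m 0 = 0 := dotProduct_zero m

@[simp] lemma pairQ_add_left (m m' v : Fin n → ℚ) : pairQ (m + m') v = pairQ m v + pairQ m' v :=
  add_dotProduct m m' v

@[simp] lemma pairQ_add_right (m v v' : Fin n → ℚ) : pairQ m (v + v') = pairQ m v + pairQ m v' :=
  dotProduct_add m v v'

@[simp] lemma pairQ_sub_left (m m' v : Fin n → ℚ) : pairQ (m - m') v = pairQ m v - pairQ m' v :=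
  sub_dotProduct m m' v

@[simp] lemma pairQ_smul_left (c : ℚ) (m v : Fin n → ℚ) : pairQ (c • m) v = c * pairQ m v :=
  smul_dotProduct c m v

@[simp] lemma pairQ_smul_right (c : ℚ) (m v : Fin n → ℚ) : pairQ m (c • v) = c * pairQ m v :=
  dotProduct_smul c m v

lemma sum_smul_mem_coneHull {S : Set (Fin n → ℚ)} {T : Finset (Fin n → ℚ)} (hT : ↑T ⊆ S)
    {c : (Fin n → ℚ) → ℚ} (hc : ∀ x ∈ T, 0 ≤ c x) : ∑ x ∈ T, c x • x ∈ coneHull S :=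
  ⟨T, c, hT, hc, rfl⟩

lemma zero_mem_coneHull (S : Set (Fin n → ℚ)) : 0 ∈ coneHull S := by
  simpa using sum_smul_mem_coneHull (Finset.coe_empty.trans_subset (Set.empty_subset S))
    (c := 0) (by simp)

lemma coneHull_empty : coneHull (∅ : Set (Fin n → ℚ)) = {0} := by
  refine Set.eq_singleton_iff_unique_mem.2 ⟨zero_mem_coneHull _, ?_⟩
  rintro _ ⟨T, c, hT, -, rfl⟩
  simp [Finset.coe_eq_empty.1 (Set.subset_empty_iff.1 hT)]

lemma mem_dualCone_coneHull {S : Set (Fin n → ℚ)} {m : Fin n → ℚ} :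
    m ∈ dualCone (coneHull S) ↔ ∀ s ∈ S, 0 ≤ pairQ m s := by
  refine ⟨fun hm s hs => hm s ⟨{s}, 1, by simpa using hs, by simp, by simp⟩, ?_⟩
  rintro hm _ ⟨T, c, hT, hc, rfl⟩
  rw [pairQ_eq_dotProduct, dotProduct_sum]
  exact Finset.sum_nonneg fun x hx => by
    rw [← pairQ_eq_dotProduct, pairQ_smul_right]; exact mul_nonneg (hc x hx) (hm x (hT hx))

lemma zero_notMem_convexHull_of_isStronglyConvex {S : Finset (Fin n → ℚ)}
    (hS : IsStronglyConvex (coneHull (S : Set (Fin n → ℚ)))) :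
    (0 : Fin n → ℚ) ∉ convexHull ℚ ↑(S.filter (· ≠ 0)) := by
  rw [Finset.mem_convexHull']
  rintro ⟨w, hw0, hw1, hw⟩
  obtain ⟨s, hs, hws⟩ : ∃ s ∈ S.filter (· ≠ 0), 0 < w s := by
    by_contra! h
    linarith [Finset.sum_nonpos h]
  have hsS : s ∈ S := (Finset.mem_filter.1 hs).1
  have hpos : w s • s ∈ coneHull ↑S := by
    simpa using
      sum_smul_mem_coneHull (T := {s}) (by simpa using hsS) (c := w) (by simpa using hws.le)
  have hneg : -(w s • s) ∈ coneHull ↑S := by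
    rw [← Finset.add_sum_erase _ _ hs] at hw
    rw [neg_eq_of_add_eq_zero_right hw]
    exact sum_smul_mem_coneHull
      (fun x hx => (Finset.mem_filter.1 (Finset.mem_of_mem_erase hx)).1)
      fun x hx => hw0 x (Finset.mem_of_mem_erase hx)
  rcases smul_eq_zero.1 (hS _ hpos hneg) with h | h
  · exact hws.ne' h
  · exact (Finset.mem_filter.1 hs).2 h

lemma mem_relint_dualCone_coneHull {S : Finset (Fin n → ℚ)} {m : Fin n → ℚ}
    (hm : ∀ s ∈ S, s ≠ 0 → 0 < pairQ m s) : m ∈ relint (dualCone (coneHull ↑S)) := by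
  have hm' : ∀ s ∈ S, 0 ≤ pairQ m s := fun s hs => by
    rcases eq_or_ne s 0 with rfl | h0
    · simp
    · exact (hm s hs h0).le
  refine ⟨mem_dualCone_coneHull.2 hm', fun y hy => ?_⟩
  rw [mem_dualCone_coneHull] at hy
  have hsmall : ∀ᶠ ε in 𝓝[>] (0 : ℚ), ∀ s ∈ S, s ≠ 0 → ε * pairQ y s < pairQ m s := by
    refine (eventually_all_finset S).2 fun s hs => ?_
    rcases eq_or_ne s 0 with rfl | h0
    · exact .of_forall fun _ h => absurd rfl h
    have : Tendsto (fun ε => ε * pairQ y s) (𝓝[>] 0) (𝓝 0) := by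
      simpa using ((tendsto_id (x := 𝓝 (0 : ℚ))).mul_const (pairQ y s)).mono_left nhdsWithin_le_nhds
    exact (this.eventually (gt_mem_nhds (hm s hs h0))).mono fun _ h _ => h
  obtain ⟨ε, hε, hε0⟩ := (hsmall.and self_mem_nhdsWithin).exists
  refine ⟨1 + ε, by linarith [hε0], mem_dualCone_coneHull.2 fun s hs => ?_⟩
  have : pairQ (y + (1 + ε) • (m - y)) s = pairQ m s + ε * (pairQ m s - pairQ y s) := by
    simp only [pairQ_add_left, pairQ_smul_left, pairQ_sub_left]
    ring
  rw [this]
  rcases eq_or_ne s 0 with rfl | h0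
  · simp
  · nlinarith [hε s hs h0, hm s hs h0, hε0]

lemma mem_lowerBounds_pairQ_image {σ Q : Set (Fin n → ℚ)} {m : Fin n → ℚ} {b : ℚ}
    (hm : m ∈ dualCone σ) (hb : ∀ q ∈ Q, b ≤ pairQ m q) :
    b ∈ lowerBounds (pairQ m '' (convexHull ℚ Q + σ)) := by
  rintro _ ⟨_, ⟨p, hp, u, hu, rfl⟩, rfl⟩
  have hhalf : Convex ℚ {x | b ≤ pairQ m x} :=
    convex_halfSpace_ge ⟨dotProduct_add m, fun c x => dotProduct_smul c m x⟩ b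
  have hpb : b ≤ pairQ m p := convexHull_min hb hhalf hp
  rw [pairQ_add_right]
  linarith [hm u hu]

lemma exists_isLeast_pairQ_image {σ : Set (Fin n → ℚ)} {Q : Finset (Fin n → ℚ)}
    (hQ : Q.Nonempty) (hσ : 0 ∈ σ) {m : Fin n → ℚ} (hm : m ∈ dualCone σ) :
    ∃ a, IsLeast (pairQ m '' (convexHull ℚ ↑Q + σ)) a := by
  obtain ⟨q, hq, hmin⟩ := Q.exists_min_image (pairQ m) hQ
  exact ⟨pairQ m q, ⟨q, ⟨q, subset_convexHull ℚ _ hq, 0, hσ, add_zero q⟩, rfl⟩,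
    mem_lowerBounds_pairQ_image hm hmin⟩

lemma isGLB_pairQ_smul_image_iff {Δ : Set (Fin n → ℚ)} {m : Fin n → ℚ} {d a : ℚ} (hd : 0 < d) :
    IsGLB (pairQ (d • m) '' Δ) (d * a) ↔ IsGLB (pairQ m '' Δ) a := by
  have : pairQ (d • m) '' Δ = OrderIso.mulLeft₀ d hd '' (pairQ m '' Δ) := by
    rw [Set.image_image]
    simp
  rw [this]
  exact (OrderIso.mulLeft₀ d hd).isGLB_image'

/-- A point `(u, r)` pairs with `(m, t)` to `⟨m, u⟩ + r t`; this homogenises the affine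
functionals `m ↦ ⟨m, u⟩ - t` on `M_ℚ`. -/
def homPairing (n : ℕ) : ((Fin n → ℚ) × ℚ) →ₗ[ℚ] Module.Dual ℚ ((Fin n → ℚ) × ℚ) :=
  LinearMap.mk₂ ℚ (fun p x => x.1 ⬝ᵥ p.1 + p.2 * x.2)
    (fun p p' x => by simp only [Prod.fst_add, Prod.snd_add, dotProduct_add]; ring)
    (fun c p x => by simp only [Prod.smul_fst, Prod.smul_snd, dotProduct_smul, smul_eq_mul]; ring)
    (fun p x x' => by simp only [Prod.fst_add, Prod.snd_add, add_dotProduct]; ring)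
    (fun c p x => by simp only [Prod.smul_fst, Prod.smul_snd, smul_dotProduct, smul_eq_mul]; ring)

lemma homPairing_apply (p x : (Fin n → ℚ) × ℚ) : homPairing n p x = x.1 ⬝ᵥ p.1 + p.2 * x.2 := rfl

lemma homPairing_injective : Function.Injective (homPairing n) := by
  intro p p' h
  have h2 := LinearMap.congr_fun h (0, 1)
  have h1 := fun j => LinearMap.congr_fun h (Pi.single j 1, 0)
  simp only [homPairing_apply, zero_dotProduct, single_dotProduct] at h1 h2
  exact Prod.ext (funext fun j => by simpa using h1 j) (by simpa using h2)

lemma exists_separating_of_notMem (Q S : Finset (Fin n → ℚ)) {v : Fin n → ℚ}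
    (hv : v ∉ convexHull ℚ ↑Q + coneHull ↑S) :
    ∃ m t, (∀ s ∈ S, 0 ≤ pairQ m s) ∧ pairQ m v < t ∧ ∀ q ∈ Q, t ≤ pairQ m q := by
  let p : (Fin n → ℚ) ⊕ (Fin n → ℚ) → (Fin n → ℚ) × ℚ :=
    Sum.elim (fun q => (q, -1)) (fun s => (s, 0))
  rcases farkas_alternative (Q.disjSum S) (homPairing n ∘ p) (homPairing n (v, -1)) with
    ⟨y, hy, hsum⟩ | ⟨⟨m, t⟩, hx, hc⟩
  · simp only [Function.comp_apply, ← map_smul, ← map_sum] at hsum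
    have h := homPairing_injective hsum
    simp only [Prod.ext_iff, Finset.sum_disjSum, Prod.fst_add, Prod.snd_add, Prod.fst_sum,
      Prod.snd_sum, Prod.smul_fst, Prod.smul_snd, p, Sum.elim_inl, Sum.elim_inr] at h
    obtain ⟨rfl, hy1⟩ := h
    refine (hv (Set.add_mem_add (Finset.mem_convexHull'.2 ⟨_, fun q hq => hy _ ?_, ?_, rfl⟩)
      (sum_smul_mem_coneHull subset_rfl fun s hs => hy _ ?_))).elim
    · simpa using hq
    · simpa using hy1.symm
    · simpa using hs
  · refine ⟨m, t, fun s hs => ?_, ?_, fun q hq => ?_⟩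
    · simpa [p, homPairing_apply, pairQ_eq_dotProduct] using hx (.inr s) (by simpa using hs)
    · simpa [homPairing_apply, pairQ_eq_dotProduct, add_neg_lt_iff_lt_add] using hc
    · simpa [p, homPairing_apply, pairQ_eq_dotProduct, ← sub_eq_add_neg]
        using hx (.inl q) (by simpa using hq)

lemma exists_pos_on_nonzero_of_isStronglyConvex {S : Finset (Fin n → ℚ)}
    (hS : IsStronglyConvex (coneHull (S : Set (Fin n → ℚ)))) :
    ∃ m, ∀ s ∈ S, s ≠ 0 → 0 < pairQ m s := by
  obtain ⟨m, t, -, ht, hQ⟩ := exists_separating_of_notMem (S.filter (· ≠ 0)) ∅ (v := 0)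
    (by simpa [coneHull_empty] using zero_notMem_convexHull_of_isStronglyConvex hS)
  exact ⟨m, fun s hs hs0 => by simpa using ht.trans_le (hQ s (Finset.mem_filter.2 ⟨hs, hs0⟩))⟩

lemma exists_nat_smul_eq_intCast (m : Fin n → ℚ) :
    ∃ d : ℕ, 0 < d ∧ ∃ z : Fin n → ℤ, (fun i => (z i : ℚ)) = (d : ℚ) • m := by
  refine ⟨∏ i, (m i).den, Finset.prod_pos fun i _ => (m i).pos,
    fun i => (m i).num * ∏ j ∈ Finset.univ.erase i, ((m j).den : ℤ), funext fun i => ?_⟩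
  rw [← Finset.mul_prod_erase _ _ (Finset.mem_univ i)]
  push_cast
  rw [← Rat.mul_den_eq_num]
  simp only [Pi.smul_apply, smul_eq_mul]
  ring

lemma isGLB_iff_of_forall_intCast {S : Finset (Fin n → ℚ)} {Δ₁ Δ₂ : Set (Fin n → ℚ)}
    (H : ∀ m : Fin n → ℤ, (fun i => (m i : ℚ)) ∈ relint (dualCone (coneHull ↑S)) →
      ∀ a : ℚ, IsGLB ((fun v => pairQ (fun i => (m i : ℚ)) v) '' Δ₁) a ↔
        IsGLB ((fun v => pairQ (fun i => (m i : ℚ)) v) '' Δ₂) a)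
    {μ : Fin n → ℚ} (hμ : ∀ s ∈ S, s ≠ 0 → 0 < pairQ μ s) (a : ℚ) :
    IsGLB (pairQ μ '' Δ₁) a ↔ IsGLB (pairQ μ '' Δ₂) a := by
  obtain ⟨d, hd, z, hz⟩ := exists_nat_smul_eq_intCast μ
  have hd' : (0 : ℚ) < d := by exact_mod_cast hd
  have hz_rel : (fun i => (z i : ℚ)) ∈ relint (dualCone (coneHull ↑S)) := by
    rw [hz]
    exact mem_relint_dualCone_coneHull fun s hs hs0 => by simpa using mul_pos hd' (hμ s hs hs0)
  have := H z hz_rel (d * a)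
  rw [hz] at this
  rwa [isGLB_pairQ_smul_image_iff hd', isGLB_pairQ_smul_image_iff hd'] at this

lemma subset_of_forall_isGLB {S Q₁ Q₂ : Finset (Fin n → ℚ)}
    (hS : IsStronglyConvex (coneHull (S : Set (Fin n → ℚ))))
    (H : ∀ μ : Fin n → ℚ, (∀ s ∈ S, s ≠ 0 → 0 < pairQ μ s) → ∀ a,
      IsGLB (pairQ μ '' (convexHull ℚ ↑Q₁ + coneHull (S : Set (Fin n → ℚ)))) a →
        IsGLB (pairQ μ '' (convexHull ℚ ↑Q₂ + coneHull (S : Set (Fin n → ℚ)))) a) :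
    (convexHull ℚ ↑Q₁ + coneHull ↑S : Set (Fin n → ℚ)) ⊆ convexHull ℚ ↑Q₂ + coneHull ↑S := by
  intro v hv
  by_contra hv₂
  obtain ⟨m, t, hmS, hmv, hmQ⟩ := exists_separating_of_notMem Q₂ S hv₂
  obtain ⟨m₀, hm₀⟩ := exists_pos_on_nonzero_of_isStronglyConvex hS
  obtain ⟨c, hc⟩ := (Q₂.image (pairQ m₀)).bddBelow
  obtain ⟨N, hN⟩ := exists_nat_gt ((pairQ m₀ v - c) / (t - pairQ m v))
  rw [div_lt_iff₀ (sub_pos.2 hmv)] at hN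
  set μ := (N : ℚ) • m + m₀ with hμ_def
  have hμ : ∀ s ∈ S, s ≠ 0 → 0 < pairQ μ s := fun s hs hs0 => by
    simpa [hμ_def] using
      add_pos_of_nonneg_of_pos (mul_nonneg N.cast_nonneg (hmS s hs)) (hm₀ s hs hs0)
  have hμσ : μ ∈ dualCone (coneHull ↑S) := (mem_relint_dualCone_coneHull hμ).1
  have hQ₁ : Q₁.Nonempty := by
    obtain ⟨p, hp, -⟩ := hv
    exact Finset.coe_nonempty.1 (convexHull_nonempty_iff.1 ⟨p, hp⟩)
  obtain ⟨a, ha⟩ := exists_isLeast_pairQ_image hQ₁ (zero_mem_coneHull _) hμσ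
  have hupper : a ≤ N * pairQ m v + pairQ m₀ v := by simpa [hμ_def] using ha.2 ⟨v, hv, rfl⟩
  have hlower : N * t + c ≤ a := (H μ hμ a ha.isGLB).2 <|
    mem_lowerBounds_pairQ_image hμσ fun q hq => by
      have := hc (Finset.mem_coe.2 (Finset.mem_image_of_mem _ hq))
      simpa [hμ_def] using add_le_add (mul_le_mul_of_nonneg_left (hmQ q hq) N.cast_nonneg) this
  nlinarith

end Cones

/-- Two `σ`-polyhedra coincide iff their support functions agree on all
lattice points of the relative interior of `σ^∨`. -/
theorem stmt2 {n : ℕ} (σ Δ₁ Δ₂ : Set (Fin n → ℚ))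
    (hσpoly : IsPolyhedralCone σ) (hσconv : IsStronglyConvex σ)
    (hΔ₁ : IsSigmaPolyhedron σ Δ₁) (hΔ₂ : IsSigmaPolyhedron σ Δ₂) :
    Δ₁ = Δ₂ ↔
      ∀ m : Fin n → ℤ, (fun i => (m i : ℚ)) ∈ relint (dualCone σ) →
        ∀ a : ℚ, IsGLB ((fun v => pairQ (fun i => (m i : ℚ)) v) '' Δ₁) a ↔
          IsGLB ((fun v => pairQ (fun i => (m i : ℚ)) v) '' Δ₂) a := by
  obtain ⟨S, rfl⟩ := hσpoly
  obtain ⟨Q₁, -, rfl⟩ := hΔ₁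
  obtain ⟨Q₂, -, rfl⟩ := hΔ₂
  refine ⟨fun h _ _ _ => by rw [h], fun H => Set.Subset.antisymm ?_ ?_⟩
  · exact subset_of_forall_isGLB hσconv fun _ hμ a => (isGLB_iff_of_forall_intCast H hμ a).1
  · exact subset_of_forall_isGLB hσconv fun _ hμ a => (isGLB_iff_of_forall_intCast H hμ a).2
end

section
/- For rational Weil divisors D₁, …, D_r on Y = Spec A₀ where A₀ is a Dedekind domain, the ℕ^r-graded algebra B = ⊕_{(m₁,…,m_r)∈ℕ^r} H⁰(Y, O_Y(⌊Σ_i m_i D_i⌋)) is finitely generated as an algebra over A₀. -/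
/-!
Let `M_m ⊆ K₀` be the fractional ideal `H⁰(Y, O_Y(⌊Σ mᵢ Dᵢ⌋))`; it is finitely generated
because `A₀` is noetherian. Superadditivity of `⌊·⌋` gives `M_a M_b ⊆ M_{a+b}`, so the
polynomials with `x^m`-coefficient in `M_m` form a subalgebra. Choose `d > 0` with every `d Dᵢ`
integral. Adding an integral divisor commutes with `⌊·⌋`, so `M_m = M_{m - d eᵢ} M_{d eᵢ}`
whenever `mᵢ ≥ d`. Hence the algebra is generated by the monomials `t x^m` with `m ∈ {0, …, d}^r`
and `t` in a finite generating set of `M_m`.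
-/

open IsDedekindDomain

namespace MvPolynomial

variable {σ R A : Type*} [CommSemiring R] [CommSemiring A] [Algebra R A]

def coeffSubalgebra (M : (σ →₀ ℕ) → Submodule R A) (one_mem : 1 ∈ M 0)
    (mul_le : ∀ a b, M a * M b ≤ M (a + b)) : Subalgebra R (MvPolynomial σ A) where
  carrier := {q | ∀ m, coeff m q ∈ M m}
  zero_mem' m := by simp
  add_mem' hq hq' m := by simpa only [coeff_add] using add_mem (hq m) (hq' m)
  mul_mem' {q q'} hq hq' m := by
    classical
    rw [coeff_mul]
    refine sum_mem fun c hc => ?_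
    rw [Finset.HasAntidiagonal.mem_antidiagonal] at hc
    exact hc ▸ mul_le c.1 c.2 (Submodule.mul_mem_mul (hq c.1) (hq' c.2))
  algebraMap_mem' a m := by
    classical
    rw [algebraMap_apply, coeff_C]
    split_ifs with h
    · subst h
      simpa [Algebra.algebraMap_eq_smul_one] using Submodule.smul_mem _ a one_mem
    · exact zero_mem _

variable {M : (σ →₀ ℕ) → Submodule R A} {one_mem : 1 ∈ M 0}
  {mul_le : ∀ a b, M a * M b ≤ M (a + b)}

theorem mem_coeffSubalgebra {q : MvPolynomial σ A} :
    q ∈ coeffSubalgebra M one_mem mul_le ↔ ∀ m, coeff m q ∈ M m :=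
  Iff.rfl

theorem coeffSubalgebra_fg {S : Set (σ →₀ ℕ)} (hS : S.Finite) (hfg : ∀ m ∈ S, (M m).FG)
    (hsplit : ∀ m ∉ S, ∃ e ∈ S, e ≠ 0 ∧ e ≤ m ∧ M m ≤ M (m - e) * M e) :
    (coeffSubalgebra M one_mem mul_le).FG := by
  choose T hTfin hTspan using fun m (hm : m ∈ S) => Submodule.fg_def.mp (hfg m hm)
  set G : Set (MvPolynomial σ A) := ⋃ (m) (hm : m ∈ S), monomial m '' T m hm
  have hG : G.Finite := hS.biUnion' fun m hm => (hTfin m hm).image _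
  have small_mem : ∀ m (hm : m ∈ S), ∀ a ∈ M m, monomial m a ∈ Algebra.adjoin R G := by
    intro m hm a ha
    rw [← hTspan m hm] at ha
    refine Algebra.span_le_adjoin R G (Submodule.span_mono ?_ <|
      Submodule.apply_mem_span_image_of_mem_span ((monomial m).restrictScalars R) ha)
    exact Set.subset_iUnion₂ (s := fun m (hm : m ∈ S) => monomial m '' T m hm) m hm
  have monomial_mem : ∀ m, ∀ a ∈ M m, monomial m a ∈ Algebra.adjoin R G := by
    intro m
    induction m using WellFoundedLT.induction with
    | _ m ih =>
      intro a ha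
      by_cases hm : m ∈ S
      · exact small_mem m hm a ha
      obtain ⟨e, he, he0, hem, hle⟩ := hsplit m hm
      have hm_eq : m - e + e = m := tsub_add_cancel_of_le hem
      have hlt : m - e < m := by
        conv_rhs => rw [← hm_eq]
        exact lt_add_of_pos_right _ (pos_iff_ne_zero.mpr he0)
      refine Submodule.mul_induction_on (hle ha) (fun b hb c hc => ?_) fun _ _ hb hc => ?_
      · rw [← hm_eq, ← monomial_mul]
        exact mul_mem (ih _ hlt b hb) (small_mem e he c hc)
      · simpa only [map_add] using add_mem hb hc
  refine Subalgebra.fg_def.mpr ⟨G, hG, le_antisymm ?_ fun q hq => ?_⟩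
  · rw [Algebra.adjoin_le_iff]
    rintro _ ⟨_, ⟨m, rfl⟩, _, ⟨hm, rfl⟩, t, ht, rfl⟩
    intro m'
    classical
    rw [coeff_monomial]
    split_ifs with h
    · exact h ▸ hTspan m hm ▸ Submodule.subset_span ht
    · exact zero_mem _
  · rw [q.as_sum]
    exact sum_mem fun m _ => monomial_mem m _ (hq m)

end MvPolynomial

namespace Finsupp

variable {α : Type*}

noncomputable def floor (E : α →₀ ℚ) : α →₀ ℤ :=
  mapRange Int.floor Int.floor_zero E

@[simp]
theorem floor_apply (E : α →₀ ℚ) (a : α) : E.floor a = ⌊E a⌋ :=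
  mapRange_apply ..

theorem floor_add_floor_le (E F : α →₀ ℚ) : E.floor + F.floor ≤ (E + F).floor := fun a => by
  simpa using Int.le_floor_add (E a) (F a)

theorem floor_add_of_forall_eq_intCast {E F : α →₀ ℚ} (hF : ∀ a, ∃ z : ℤ, F a = z) :
    (E + F).floor = E.floor + F.floor := by
  ext a
  obtain ⟨z, hz⟩ := hF a
  simp [hz]

theorem exists_pos_nat_mul_eq_intCast {ι : Type*} [Finite ι] (D : ι → α →₀ ℚ) :
    ∃ d : ℕ, 0 < d ∧ ∀ i a, ∃ z : ℤ, (d : ℚ) * D i a = z := by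
  classical
  have := Fintype.ofFinite ι
  set s := Finset.univ.biUnion fun i => (D i).frange
  refine ⟨∏ q ∈ s, q.den, Finset.prod_pos fun q _ => q.pos, fun i a => ?_⟩
  by_cases h : D i a = 0
  · exact ⟨0, by simp [h]⟩
  have hs : D i a ∈ s := Finset.mem_biUnion.mpr ⟨i, Finset.mem_univ i, mem_frange.mpr ⟨h, a, rfl⟩⟩
  obtain ⟨k, hk⟩ := Finset.dvd_prod_of_mem Rat.den hs
  refine ⟨k * (D i a).num, ?_⟩
  push_cast [hk, ← Rat.mul_den_eq_num]
  ring

end Finsupp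

section DedekindDomain

open FractionalIdeal
open scoped nonZeroDivisors

variable {R K : Type*} [CommRing R] [IsDedekindDomain R] [Field K] [Algebra R K]
  [IsFractionRing R K]

theorem IsDedekindDomain.HeightOneSpectrum.valuation_eq_exp_neg_count {x : K} (hx : x ≠ 0)
    (v : HeightOneSpectrum R) :
    v.valuation K x = WithZero.exp (-count K v (spanSingleton R⁰ x)) := by
  classical
  obtain ⟨⟨n, d⟩, rfl⟩ := IsLocalization.mk'_surjective R⁰ x
  have hn : n ≠ 0 := by
    rintro rfl
    simp at hx
  have hx_eq : spanSingleton R⁰ (IsLocalization.mk' K n d) =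
      spanSingleton R⁰ (algebraMap R K d)⁻¹ * (Ideal.span {n} : Ideal R) := by
    rw [coeIdeal_span_singleton, spanSingleton_mul_spanSingleton, IsFractionRing.mk'_eq_div,
      div_eq_inv_mul]
  rw [count_well_defined K v (spanSingleton_ne_zero_iff.mpr hx) hx_eq, v.valuation_of_mk',
    v.intValuation_if_neg hn, v.intValuation_if_neg (nonZeroDivisors.coe_ne_zero d),
    ← WithZero.exp_sub]
  congr 1
  ring

namespace FractionalIdeal

theorem le_one_of_forall_count_nonneg {I : FractionalIdeal R⁰ K} (hI : I ≠ 0)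
    (h : ∀ v : HeightOneSpectrum R, 0 ≤ count K v I) : I ≤ 1 := by
  rw [← finprod_heightOneSpectrum_factorization' K hI]
  refine finprod_induction (· ≤ 1) le_rfl (fun a b ha hb => ?_) fun v => ?_
  · simpa using mul_le_mul' ha hb
  · rw [← Int.toNat_of_nonneg (h v), zpow_natCast, ← coeIdeal_pow]
    exact coeIdeal_le_one

theorem mem_iff_forall_valuation_le {I : FractionalIdeal R⁰ K} (hI : I ≠ 0) (x : K) :
    x ∈ I ↔ ∀ v : HeightOneSpectrum R, v.valuation K x ≤ WithZero.exp (-count K v I) := by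
  rcases eq_or_ne x 0 with rfl | hx
  · simpa using I.zero_mem
  have hx' : spanSingleton R⁰ x ≠ 0 := spanSingleton_ne_zero_iff.mpr hx
  simp only [HeightOneSpectrum.valuation_eq_exp_neg_count hx, WithZero.exp_le_exp, neg_le_neg_iff,
    ← spanSingleton_le_iff_mem]
  refine ⟨fun h v => count_mono K v hx' h, fun h => ?_⟩
  have hle : spanSingleton R⁰ x * I⁻¹ ≤ 1 := by
    refine le_one_of_forall_count_nonneg (mul_ne_zero hx' (inv_ne_zero hI)) fun v => ?_
    rw [count_mul K v hx' (inv_ne_zero hI), count_inv]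
    linarith [h v]
  simpa [mul_assoc, inv_mul_cancel₀ hI] using mul_le_mul_left hle I

variable (K) in
/-- `H⁰(Y, O_Y(E)) = {f : div f + E ≥ 0}`, realized as the fractional ideal `∏ v ^ (-E v)`. -/
noncomputable def ofDivisor (E : HeightOneSpectrum R →₀ ℤ) : FractionalIdeal R⁰ K :=
  (-E).prod fun v n => (v.asIdeal : FractionalIdeal R⁰ K) ^ n

theorem ofDivisor_ne_zero (E : HeightOneSpectrum R →₀ ℤ) : ofDivisor K E ≠ 0 :=
  Finset.prod_ne_zero_iff.mpr fun v _ => zpow_ne_zero _ (coeIdeal_ne_zero.mpr v.ne_bot)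

theorem mem_ofDivisor_iff {E : HeightOneSpectrum R →₀ ℤ} {x : K} :
    x ∈ ofDivisor K E ↔ ∀ v : HeightOneSpectrum R, v.valuation K x ≤ WithZero.exp (E v) := by
  rw [mem_iff_forall_valuation_le (ofDivisor_ne_zero E)]
  simp [ofDivisor, count_finsuppProd]

theorem ofDivisor_zero : ofDivisor K (0 : HeightOneSpectrum R →₀ ℤ) = 1 := by
  simp [ofDivisor]

theorem ofDivisor_add (E F : HeightOneSpectrum R →₀ ℤ) :
    ofDivisor K (E + F) = ofDivisor K E * ofDivisor K F := by
  classical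
  rw [ofDivisor, neg_add]
  exact Finsupp.prod_add_index (fun _ _ => zpow_zero _)
    fun v _ => zpow_add₀ (coeIdeal_ne_zero.mpr v.ne_bot)

theorem ofDivisor_mono : Monotone (ofDivisor (R := R) K) := fun E F h x hx => by
  rw [mem_ofDivisor_iff] at hx ⊢
  exact fun v => (hx v).trans (WithZero.exp_le_exp.mpr (h v))

end FractionalIdeal

open MvPolynomial

variable {ι : Type*} (K) (D : ι → HeightOneSpectrum R →₀ ℚ)

noncomputable def divisorAlgebra : Subalgebra R (MvPolynomial ι K) :=
  coeffSubalgebra (fun m => ofDivisor K (Finsupp.linearCombination ℕ D m).floor)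
    (by simp [Finsupp.floor, ofDivisor_zero])
    fun a b => by
      rw [← FractionalIdeal.coe_mul, ← ofDivisor_add, coe_le_coe, map_add]
      exact ofDivisor_mono (Finsupp.floor_add_floor_le _ _)

variable {K D}

theorem mem_divisorAlgebra_iff {q : MvPolynomial ι K} :
    q ∈ divisorAlgebra K D ↔ ∀ m, ∀ v : HeightOneSpectrum R,
      v.valuation K (coeff m q) ≤ WithZero.exp ⌊Finsupp.linearCombination ℕ D m v⌋ := by
  simp only [divisorAlgebra, mem_coeffSubalgebra, mem_coe, mem_ofDivisor_iff,
    Finsupp.floor_apply]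

theorem divisorAlgebra_fg [Finite ι] : (divisorAlgebra K D).FG := by
  obtain ⟨d, hd, hdD⟩ := Finsupp.exists_pos_nat_mul_eq_intCast D
  refine coeffSubalgebra_fg (S := {m | ∀ i, m i ≤ d}) ?_
    (fun m _ => fg_of_isNoetherianRing le_rfl _) fun m hm => ?_
  · classical
    refine (Set.finite_Iic (Finsupp.equivFunOnFinite.symm fun _ => d)).subset fun m hm => ?_
    exact Finsupp.le_def.mpr hm
  · simp only [Set.mem_ofPred_eq, not_forall, not_le] at hm
    obtain ⟨i, hi⟩ := hm
    refine ⟨Finsupp.single i d, fun j => ?_, Finsupp.single_ne_zero.mpr hd.ne',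
      Finsupp.single_le_iff.mpr hi.le, ?_⟩
    · classical
      rw [Finsupp.single_apply]
      split_ifs <;> omega
    · rw [← FractionalIdeal.coe_mul, ← ofDivisor_add, ← Finsupp.floor_add_of_forall_eq_intCast,
        ← map_add, tsub_add_cancel_of_le (Finsupp.single_le_iff.mpr hi.le)]
      intro v
      simpa [Finsupp.linearCombination_single] using hdD i v

end DedekindDomain

theorem stmt5_general (A₀ : Type*) [CommRing A₀] [IsDedekindDomain A₀]
    (K₀ : Type*) [Field K₀] [Algebra A₀ K₀] [IsFractionRing A₀ K₀]
    (r : ℕ) (D : Fin r → (HeightOneSpectrum A₀ →₀ ℚ)) :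
    ∃ B : Subalgebra A₀ (MvPolynomial (Fin r) K₀),
      (∀ q : MvPolynomial (Fin r) K₀, q ∈ B ↔
        ∀ m : Fin r →₀ ℕ, ∀ p : HeightOneSpectrum A₀,
          p.valuation K₀ (MvPolynomial.coeff m q) ≤
            ((Multiplicative.ofAdd ⌊∑ i : Fin r, (m i : ℚ) * D i p⌋ : Multiplicative ℤ) :
              WithZero (Multiplicative ℤ))) ∧
      B.FG := by
  refine ⟨divisorAlgebra K₀ D, fun q => ?_, divisorAlgebra_fg⟩
  simp [mem_divisorAlgebra_iff, Finsupp.linearCombination_apply, Finsupp.sum_fintype,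
    Finsupp.finsetSum_apply, WithZero.exp]

/-- For `ℚ`-Weil divisors `D₁, …, D_r` on `Y = Spec A₀` (`A₀` a Dedekind
domain), the `ℕ^r`-graded algebra `B = ⊕_{m∈ℕ^r} H⁰(Y, O_Y(⌊Σᵢ mᵢ Dᵢ⌋))` (realized as the
subalgebra of `K₀[x₁,…,x_r]` whose coefficient of the monomial `x^m` lies in
`H⁰(Y, O_Y(⌊Σᵢ mᵢ Dᵢ⌋))`) is a finitely generated `A₀`-algebra. -/
theorem stmt5 (A₀ : Type*) [CommRing A₀] [IsDedekindDomain A₀] (hnf : ¬ IsField A₀)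
    (K₀ : Type*) [Field K₀] [Algebra A₀ K₀] [IsFractionRing A₀ K₀]
    (r : ℕ) (D : Fin r → (HeightOneSpectrum A₀ →₀ ℚ)) :
    ∃ B : Subalgebra A₀ (MvPolynomial (Fin r) K₀),
      (∀ q : MvPolynomial (Fin r) K₀, q ∈ B ↔
        ∀ m : Fin r →₀ ℕ, ∀ p : HeightOneSpectrum A₀,
          p.valuation K₀ (MvPolynomial.coeff m q) ≤
            ((Multiplicative.ofAdd ⌊∑ i : Fin r, (m i : ℚ) * D i p⌋ : Multiplicative ℤ) :
              WithZero (Multiplicative ℤ))) ∧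
      B.FG :=
  stmt5_general A₀ K₀ r D
end

section
/- Let A be a commutative ring graded by a finitely generated abelian group G. Then A is Noetherian if and only if the degree-zero piece A₀ is a Noetherian ring and A is finitely generated as an A₀-algebra. -/
/-!
If `x` has degree `g` and lies in the ideal generated by homogeneous `z` of degrees `d z`, then
taking degree-`g` components writes `x = ∑ c_z z` with `c_z` homogeneous of degree `g - d z`.

Adjoin the generators `a` of `G` one at a time to a subgroup `K` whose components lie in a
finitely generated `A₀`-subalgebra. Call `n` a level of `g` if `g - n • a ∈ K`. Since `A` is
Noetherian, finitely many homogeneous elements of positive level generate the ideal spanned by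
all homogeneous elements of positive level; if `D` bounds their
levels, a component of level `n > D` is a combination of them with coefficients of level in
`[0, n)`, so induction on `n` leaves only the finitely many cosets of level `≤ D`, each of which
needs one more finite generating set. The same with `-a` covers `K ⊔ ℤ a`. Levels need not be
unique, and the argument never uses that they are, so `a` of finite order modulo `K` needs no
separate treatment.

`A₀` is Noetherian because the projection onto degree `0` is an `A₀`-linear retraction of `A`
onto `A₀`, so `I ↦ I A` embeds the ideals of `A₀` into those of `A`. The converse is the Hilbert
basis theorem.
-/

open DirectSum

namespace Subring

variable {A : Type*} [CommRing A]

theorem comap_map_subtype_of_retraction (B : Subring A) (π : A →+ A)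
    (hπB : ∀ x, π x ∈ B) (hπ_id : ∀ b ∈ B, π b = b)
    (hπ_mul : ∀ b ∈ B, ∀ x, π (b * x) = b * π x) (I : Ideal B) :
    (I.map B.subtype).comap B.subtype = I := by
  refine le_antisymm (fun x hx => ?_) Ideal.le_comap_map
  have key : ∀ y ∈ I.map B.subtype, ∀ a : A, (⟨π (a * y), hπB _⟩ : B) ∈ I := by
    intro y hy
    induction hy using Submodule.span_induction with
    | mem y hy =>
      obtain ⟨i, hi, rfl⟩ := hy
      intro a
      have h : (⟨π (a * i), hπB _⟩ : B) = i * ⟨π a, hπB a⟩ :=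
        Subtype.ext (by simp [mul_comm a, hπ_mul _ i.2])
      rw [Subring.subtype_apply, h]
      exact I.mul_mem_right _ hi
    | zero =>
      intro a
      convert I.zero_mem
      simp
    | add y z _ _ hy hz =>
      intro a
      have h : (⟨π (a * (y + z)), hπB _⟩ : B) = ⟨π (a * y), hπB _⟩ + ⟨π (a * z), hπB _⟩ :=
        Subtype.ext (by simp [mul_add])
      rw [h]
      exact I.add_mem (hy a) (hz a)
    | smul c y _ hy =>
      intro a
      simpa [smul_eq_mul, mul_assoc] using hy (a * c)
  have hx' := key _ hx 1
  simp only [Subring.subtype_apply, one_mul, hπ_id _ x.2] at hx'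
  exact hx'

theorem isNoetherianRing_of_retraction [IsNoetherianRing A] (B : Subring A)
    (π : A →+ A) (hπB : ∀ x, π x ∈ B) (hπ_id : ∀ b ∈ B, π b = b)
    (hπ_mul : ∀ b ∈ B, ∀ x, π (b * x) = b * π x) : IsNoetherianRing B := by
  have hinj : Function.Injective (Ideal.map B.subtype : Ideal B → Ideal A) :=
    Function.LeftInverse.injective (B.comap_map_subtype_of_retraction π hπB hπ_id hπ_mul)
  rw [isNoetherianRing_iff, isNoetherian_iff']
  exact (Monotone.strictMono_of_injective (fun _ _ => Ideal.map_mono) hinj).wellFoundedGT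

theorem isNoetherianRing_of_closure_union_eq_top (B : Subring A) [IsNoetherianRing B]
    (s : Finset A) (h : closure ((B : Set A) ∪ s) = ⊤) : IsNoetherianRing A := by
  have : Algebra.FiniteType B A := by
    refine ⟨s, Subalgebra.toSubring_injective ?_⟩
    rw [Algebra.adjoin_eq_ring_closure, Algebra.top_toSubring, ← h]
    congr
    exact Subtype.range_coe
  exact Algebra.FiniteType.isNoetherianRing B A

end Subring

section Graded

variable {G A σ : Type*} [AddCommGroup G] [CommRing A] [SetLike σ A] (𝒜 : G → σ)

def GeneratesComponents (K : AddSubgroup G) (s : Set A) (S : Set G) : Prop :=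
  ∀ R : Subring A, (∀ k ∈ K, (𝒜 k : Set A) ⊆ R) → s ⊆ R → ∀ g ∈ S, (𝒜 g : Set A) ⊆ R

namespace GeneratesComponents

variable {𝒜} {K : AddSubgroup G} {s₁ s₂ : Set A} {S₁ S₂ : Set G}

theorem union (h₁ : GeneratesComponents 𝒜 K s₁ S₁) (h₂ : GeneratesComponents 𝒜 K s₂ S₂) :
    GeneratesComponents 𝒜 K (s₁ ∪ s₂) (S₁ ∪ S₂) := by
  rintro R hK hs g (hg | hg)
  · exact h₁ R hK (Set.subset_union_left.trans hs) g hg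
  · exact h₂ R hK (Set.subset_union_right.trans hs) g hg

theorem trans {L : AddSubgroup G} (h₁ : GeneratesComponents 𝒜 L s₁ K)
    (h₂ : GeneratesComponents 𝒜 K s₂ S₂) : GeneratesComponents 𝒜 L (s₁ ∪ s₂) S₂ :=
  fun R hL hs => h₂ R (h₁ R hL (Set.subset_union_left.trans hs)) (Set.subset_union_right.trans hs)

end GeneratesComponents

theorem exists_generatesComponents_biUnion {ι : Type*} (K : AddSubgroup G) (I : Finset ι)
    (S : ι → Set G) (h : ∀ i ∈ I, ∃ s : Finset A, GeneratesComponents 𝒜 K s (S i)) :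
    ∃ s : Finset A, GeneratesComponents 𝒜 K s (⋃ i ∈ I, S i) := by
  classical
  choose! s hs using h
  refine ⟨I.biUnion s, fun R hK hR g hg => ?_⟩
  obtain ⟨i, hi, hg⟩ := Set.mem_iUnion₂.mp hg
  refine hs i hi R hK (fun x hx => hR ?_) g hg
  simpa using ⟨i, hi, hx⟩

theorem exists_finset_homogeneous_spanning [IsNoetherianRing A] (S : Set G) :
    ∃ (T : Finset A) (d : A → G), (∀ z ∈ T, d z ∈ S ∧ z ∈ 𝒜 (d z)) ∧
      ∀ g ∈ S, (𝒜 g : Set A) ⊆ Ideal.span (T : Set A) := by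
  obtain ⟨T, hTS, hspan⟩ := (Submodule.fg_span_iff_fg_span_finset_subset
    (⋃ g ∈ S, (𝒜 g : Set A))).mp (IsNoetherian.noetherian (R := A) _)
  have hdeg : ∀ z ∈ T, ∃ g ∈ S, z ∈ 𝒜 g := fun z hz => by simpa using hTS hz
  choose! d hdS hd using hdeg
  refine ⟨T, d, fun z hz => ⟨hdS z hz, hd z hz⟩, fun g hg x hx => ?_⟩
  rw [Ideal.span, ← hspan]
  exact Submodule.subset_span (Set.mem_biUnion hg hx)

variable [DecidableEq G] [AddSubgroupClass σ A] [GradedRing 𝒜]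

theorem exists_homogeneous_coeffs_of_mem_span {T : Finset A} {d : A → G}
    (hT : ∀ z ∈ T, z ∈ 𝒜 (d z)) {g : G} {x : A} (hx : x ∈ 𝒜 g)
    (hxT : x ∈ Ideal.span (T : Set A)) :
    ∃ c : A → A, (∀ z ∈ T, c z ∈ 𝒜 (g - d z)) ∧ ∑ z ∈ T, c z * z = x := by
  obtain ⟨f, -, hf⟩ := Submodule.mem_span_finset.mp hxT
  refine ⟨fun z => decompose 𝒜 (f z) (g - d z), fun z _ => SetLike.coe_mem _, ?_⟩
  calc ∑ z ∈ T, (decompose 𝒜 (f z) (g - d z) : A) * z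
      = ∑ z ∈ T, (decompose 𝒜 (f z * z) g : A) := by
        refine Finset.sum_congr rfl fun z hz => ?_
        rw [← coe_decompose_mul_add_of_right_mem 𝒜 (hT z hz), sub_add_cancel]
    _ = decompose 𝒜 (∑ z ∈ T, f z • z) g := by
        simp only [smul_eq_mul]
        rw [decompose_sum, DFinsupp.finsetSum_apply, AddSubmonoidClass.coe_finsetSum]
    _ = x := by rw [hf, decompose_of_mem_same 𝒜 hx]

theorem mem_of_mem_span_homogeneous {R : Subring A} {T : Finset A} {d : A → G}
    (hT : ∀ z ∈ T, z ∈ 𝒜 (d z)) (hTR : (T : Set A) ⊆ R) {g : G}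
    (hR : ∀ z ∈ T, (𝒜 (g - d z) : Set A) ⊆ R) {x : A} (hx : x ∈ 𝒜 g)
    (hxT : x ∈ Ideal.span (T : Set A)) : x ∈ R := by
  obtain ⟨c, hc, rfl⟩ := exists_homogeneous_coeffs_of_mem_span 𝒜 hT hx hxT
  exact R.sum_mem fun z hz => R.mul_mem (hR z hz (hc z hz)) (hTR hz)

theorem isNoetherianRing_of_coe_eq_zero_component [IsNoetherianRing A] (A₀ : Subring A)
    (h0 : (A₀ : Set A) = 𝒜 0) : IsNoetherianRing A₀ := by
  have hA₀ : ∀ x, x ∈ A₀ ↔ x ∈ 𝒜 0 := Set.ext_iff.mp h0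
  refine A₀.isNoetherianRing_of_retraction (GradedRing.proj 𝒜 0) (fun x => ?_)
    (fun b hb => ?_) (fun b hb x => ?_)
  · exact (hA₀ _).mpr (SetLike.coe_mem _)
  · exact decompose_of_mem_same 𝒜 ((hA₀ b).mp hb)
  · exact coe_decompose_mul_of_left_mem_zero 𝒜 ((hA₀ b).mp hb)

variable [IsNoetherianRing A]

theorem exists_generatesComponents_coset (K : AddSubgroup G) (f : G) :
    ∃ s : Finset A, GeneratesComponents 𝒜 K s {g | g - f ∈ K} := by
  obtain ⟨T, d, hT, hspan⟩ := exists_finset_homogeneous_spanning 𝒜 {g | g - f ∈ K}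
  refine ⟨T, fun R hK hTR g hg x hx => ?_⟩
  refine mem_of_mem_span_homogeneous 𝒜 (fun z hz => (hT z hz).2) hTR (fun z hz => hK _ ?_) hx
    (hspan g hg hx)
  simpa using K.sub_mem hg (hT z hz).1

theorem exists_generatesComponents_nsmul (K : AddSubgroup G) (a : G) :
    ∃ s : Finset A, GeneratesComponents 𝒜 K s {g | ∃ n : ℕ, g - n • a ∈ K} := by
  classical
  obtain ⟨T, d, hT, hspan⟩ :=
    exists_finset_homogeneous_spanning 𝒜 {g | ∃ n : ℕ, 0 < n ∧ g - n • a ∈ K}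
  choose! e he using fun z hz => (hT z hz).1
  obtain ⟨D, hD⟩ := (T.image e).exists_le
  obtain ⟨s, hs⟩ := exists_generatesComponents_biUnion 𝒜 K (Finset.range (D + 1))
    (fun n => {g | g - n • a ∈ K}) fun n _ => exists_generatesComponents_coset 𝒜 K (n • a)
  refine ⟨T ∪ s, fun R hK hR => ?_⟩
  rw [Finset.coe_union] at hR
  suffices ∀ n : ℕ, ∀ g, g - n • a ∈ K → (𝒜 g : Set A) ⊆ R from
    fun g ⟨n, hg⟩ => this n g hg
  intro n
  induction n using Nat.strong_induction_on with
  | _ n ih =>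
    intro g hg x hx
    rcases le_or_gt n D with hnD | hDn
    · exact hs R hK (Set.subset_union_right.trans hR) g
        (Set.mem_biUnion (Finset.mem_range.mpr (Nat.lt_succ_of_le hnD)) hg) hx
    · have heD : ∀ z ∈ T, e z ≤ D := fun z hz => hD _ (Finset.mem_image_of_mem e hz)
      refine mem_of_mem_span_homogeneous 𝒜 (fun z hz => (hT z hz).2)
        (Set.subset_union_left.trans hR) (fun z hz => ih (n - e z) ?_ _ ?_) hx
        (hspan g ⟨n, by omega, hg⟩ hx)
      · have := (he z hz).1
        omega
      · have h : g - d z - (n - e z) • a = (g - n • a) - (d z - e z • a) := by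
          rw [sub_nsmul a ((heD z hz).trans hDn.le)]
          abel
        rw [h]
        exact K.sub_mem hg (he z hz).2

theorem exists_generatesComponents_sup_zmultiples (K : AddSubgroup G) (a : G) :
    ∃ s : Finset A, GeneratesComponents 𝒜 K s (K ⊔ AddSubgroup.zmultiples a : AddSubgroup G) := by
  classical
  obtain ⟨s₁, h₁⟩ := exists_generatesComponents_nsmul 𝒜 K a
  obtain ⟨s₂, h₂⟩ := exists_generatesComponents_nsmul 𝒜 K (-a)
  refine ⟨s₁ ∪ s₂, fun R hK hs g hg => ?_⟩
  rw [Finset.coe_union] at hs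
  refine (h₁.union h₂) R hK hs g ?_
  obtain ⟨k, hk, _, ⟨m, rfl⟩, rfl⟩ := AddSubgroup.mem_sup.mp hg
  obtain ⟨n, rfl | rfl⟩ := Int.eq_nat_or_neg m
  · exact Or.inl ⟨n, by simpa using hk⟩
  · exact Or.inr ⟨n, by simpa using hk⟩

theorem exists_generatesComponents_closure (S : Finset G) :
    ∃ s : Finset A, GeneratesComponents 𝒜 ⊥ s (AddSubgroup.closure (S : Set G)) := by
  classical
  induction S using Finset.induction_on with
  | empty => exact ⟨∅, fun R hK _ g hg => hK g (by simpa using hg)⟩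
  | insert a S _ ih =>
    obtain ⟨s₁, h₁⟩ := ih
    obtain ⟨s₂, h₂⟩ := exists_generatesComponents_sup_zmultiples 𝒜 (AddSubgroup.closure S) a
    refine ⟨s₁ ∪ s₂, ?_⟩
    rw [Finset.coe_insert, Set.insert_eq, AddSubgroup.closure_union, sup_comm,
      ← AddSubgroup.zmultiples_eq_closure, Finset.coe_union]
    exact h₁.trans h₂

theorem exists_finset_closure_union_eq_top [AddGroup.FG G] :
    ∃ s : Finset A, Subring.closure ((𝒜 0 : Set A) ∪ s) = ⊤ := by
  classical
  obtain ⟨S, hS⟩ := AddGroup.fg_def.mp ‹AddGroup.FG G›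
  obtain ⟨s, hs⟩ := exists_generatesComponents_closure 𝒜 S
  refine ⟨s, eq_top_iff.mpr fun x _ => ?_⟩
  have hcomp := hs (Subring.closure ((𝒜 0 : Set A) ∪ s))
    (fun k hk => by
      rw [AddSubgroup.mem_bot.mp hk]
      exact Set.subset_union_left.trans Subring.subset_closure)
    (Set.subset_union_right.trans Subring.subset_closure)
  rw [← sum_support_decompose 𝒜 x]
  exact sum_mem fun g _ => hcomp g (by simp [hS]) (SetLike.coe_mem _)

end Graded

/-- **Goto–Yamagishi.** Let `A` be a commutative ring graded by a finitely
generated abelian group `G`, with grading `𝒜 : G → AddSubgroup A`, and let `A₀` be the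
subring given by the piece of degree `0`. Then `A` is Noetherian iff `A₀` is a Noetherian
ring and `A` is finitely generated as an `A₀`-algebra (i.e. generated as a ring by `A₀`
together with finitely many elements). -/
theorem stmt6 {G A : Type*} [AddCommGroup G] [AddGroup.FG G] [DecidableEq G]
    [CommRing A] (𝒜 : G → AddSubgroup A) [GradedRing 𝒜]
    (A₀ : Subring A) (h0 : (A₀ : Set A) = (𝒜 0 : Set A)) :
    IsNoetherianRing A ↔
      IsNoetherianRing A₀ ∧ ∃ s : Finset A, Subring.closure ((A₀ : Set A) ∪ ↑s) = ⊤ := by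
  constructor
  · intro hN
    refine ⟨isNoetherianRing_of_coe_eq_zero_component 𝒜 A₀ h0, ?_⟩
    rw [h0]
    exact exists_finset_closure_union_eq_top 𝒜
  · rintro ⟨hA₀, s, hs⟩
    exact A₀.isNoetherianRing_of_closure_union_eq_top s hs
end

section
/- Let A₀ be a Dedekind domain with fraction field K₀, M a lattice with dual N, σ^∨ ⊆ M_ℚ a full-dimensional cone dual to a strongly convex cone σ, and A = ⊕_{m ∈ σ^∨ ∩ M} A_m χ^m ⊆ K₀[M] a normal Noetherian M-graded subalgebra over A₀ with weight cone σ^∨, A_m ⊆ K₀, and Frac A = Frac K₀[M]. Then A_m ≠ {0} for every m ∈ σ^∨ ∩ M; that is, the weight monoid of A is all of σ^∨ ∩ M. -/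
/-!
The weights `m` with `A_m ≠ 0` form a monoid whose rational cone is `σ^∨`, so for `m ∈ σ^∨ ∩ M`
some multiple `N • m` is a weight: `d χ^{N m} ∈ A` with `d ≠ 0`. Clearing the denominator of `d`
over `A₀` gives `c ∈ A₀ \ {0}` with `c^N χ^{N m} ∈ A`. Then `c χ^m` is a root of the monic
polynomial `X^N - c^N χ^{N m}` over `A` and lies in `Frac A = Frac K₀[M]`, so normality puts it
in `A`, whence `A_m ≠ 0`.
-/

open scoped Pointwise

/-- Cast a lattice point of `ℤⁿ` into `ℚⁿ`. -/
def castZ {n : ℕ} (m : Fin n → ℤ) : Fin n → ℚ := fun i => (m i : ℚ)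

open AddMonoidAlgebra Polynomial

section FractionRing

variable {R L : Type*} [CommRing R] [CommRing L] [Algebra R L] (S : Subalgebra R L)

theorem Subalgebra.isFractionRing_of_forall_exists_mul_mem {K : Type*} [Field K] [Algebra L K]
    [IsFractionRing L K]
    (hfrac : ∀ f : L, ∃ a b : L, a ∈ S ∧ b ∈ S ∧ b ≠ 0 ∧ f * b = a) : IsFractionRing S K := by
  have hinj : Function.Injective (algebraMap L K) := IsFractionRing.injective L K
  have hL : ∀ f : L, ∃ a b : S, algebraMap L K f = algebraMap S K a / algebraMap S K b := by
    intro f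
    obtain ⟨a, b, ha, hb, hb0, hab⟩ := hfrac f
    refine ⟨⟨a, ha⟩, ⟨b, hb⟩, ?_⟩
    change _ = algebraMap L K a / algebraMap L K b
    rw [eq_div_iff ((map_ne_zero_iff _ hinj).mpr hb0), ← map_mul, hab]
  have : FaithfulSMul S K :=
    (faithfulSMul_iff_algebraMap_injective S K).mpr (hinj.comp Subtype.val_injective)
  refine IsFractionRing.of_field S K fun z => ?_
  obtain ⟨p, q, -, rfl⟩ := IsFractionRing.div_surjective (A := L) z
  obtain ⟨a, b, hp⟩ := hL p
  obtain ⟨a', b', hq⟩ := hL q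
  exact ⟨a * b', b * a', by rw [hp, hq, div_div_div_eq, map_mul, map_mul]⟩

theorem Subalgebra.mem_of_pow_mem [IsDomain L] [IsIntegrallyClosed S]
    (hfrac : ∀ f : L, ∃ a b : L, a ∈ S ∧ b ∈ S ∧ b ≠ 0 ∧ f * b = a)
    {x : L} {N : ℕ} (hN : N ≠ 0) (hx : x ^ N ∈ S) : x ∈ S := by
  have := S.isFractionRing_of_forall_exists_mul_mem (K := FractionRing L) hfrac
  have hint : IsIntegral S (algebraMap L (FractionRing L) x) :=
    ⟨X ^ N - C ⟨x ^ N, hx⟩, monic_X_pow_sub_C _ hN, by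
      simp only [eval₂_sub, eval₂_pow, eval₂_X, eval₂_C]
      rw [← map_pow, sub_eq_zero]
      rfl⟩
  obtain ⟨y, hy⟩ := IsIntegrallyClosed.isIntegral_iff.mp hint
  rw [← IsFractionRing.injective L (FractionRing L) hy]
  exact y.2

end FractionRing

theorem IsFractionRing.exists_algebraMap_pow_eq_smul (R : Type*) {K : Type*} [CommRing R]
    [Field K] [Algebra R K] [IsFractionRing R K] {d : K} (hd : d ≠ 0) {N : ℕ} (hN : N ≠ 0) :
    ∃ a b : R, algebraMap R K a ≠ 0 ∧ algebraMap R K a ^ N = b • d := by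
  obtain ⟨⟨p, q⟩, hpq⟩ := IsLocalization.surj (nonZeroDivisors R) d
  refine ⟨p, p ^ (N - 1) * q, ?_, ?_⟩
  · rw [← hpq]
    exact mul_ne_zero hd (IsLocalization.map_units K q).ne_zero
  · rw [Algebra.smul_def, map_mul, map_pow, mul_assoc, mul_comm _ d, hpq, ← pow_succ,
      Nat.sub_add_cancel (Nat.pos_of_ne_zero hN)]

namespace AddMonoidAlgebra

section WeightMonoid

variable {R K G : Type*} [CommSemiring R] [Semiring K] [Algebra R K]

def weightMonoid [NoZeroDivisors K] [Nontrivial K] [AddMonoid G] (S : Subalgebra R K[G]) :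
    AddSubmonoid G where
  carrier := {m | ∃ c ≠ 0, single m c ∈ S}
  zero_mem' := ⟨1, one_ne_zero, one_def (R := K) (M := G) ▸ S.one_mem⟩
  add_mem' := by
    rintro m m' ⟨c, hc, hcS⟩ ⟨c', hc', hc'S⟩
    exact ⟨c * c', mul_ne_zero hc hc', single_mul_single m m' c c' ▸ S.mul_mem hcS hc'S⟩

variable [AddMonoid G] {S : Subalgebra R K[G]} {Am : G → Submodule R K}

theorem single_mem_iff (hmem : ∀ f : K[G], f ∈ S ↔ ∀ m, f.coeff m ∈ Am m) {m : G} {c : K} :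
    single m c ∈ S ↔ c ∈ Am m := by
  classical
  rw [hmem]
  refine ⟨fun h => by simpa [coeff_single] using h m, fun hc m' => ?_⟩
  rw [coeff_single, Finsupp.single_apply]
  split_ifs with h
  · exact h ▸ hc
  · exact (Am m').zero_mem

theorem mem_weightMonoid_iff [NoZeroDivisors K] [Nontrivial K]
    (hmem : ∀ f : K[G], f ∈ S ↔ ∀ m, f.coeff m ∈ Am m) {m : G} :
    m ∈ weightMonoid S ↔ Am m ≠ ⊥ := by
  rw [Submodule.ne_bot_iff]
  exact exists_congr fun c => by rw [single_mem_iff hmem, and_comm]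

end WeightMonoid

theorem mem_weightMonoid_of_nsmul_mem {R K G : Type*} [CommRing R] [Field K] [Algebra R K]
    [IsFractionRing R K] [AddCommMonoid G] [IsDomain K[G]] (S : Subalgebra R K[G])
    [IsIntegrallyClosed S] (hfrac : ∀ f : K[G], ∃ a b : K[G], a ∈ S ∧ b ∈ S ∧ b ≠ 0 ∧ f * b = a)
    {m : G} {N : ℕ} (hN : N ≠ 0) (h : N • m ∈ weightMonoid S) : m ∈ weightMonoid S := by
  obtain ⟨d, hd0, hdS⟩ := h
  obtain ⟨a, b, ha0, hab⟩ := IsFractionRing.exists_algebraMap_pow_eq_smul R hd0 hN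
  refine ⟨algebraMap R K a, ha0, S.mem_of_pow_mem hfrac hN ?_⟩
  rw [single_pow, hab, ← smul_single]
  exact S.smul_mem hdS b

end AddMonoidAlgebra

theorem Finset.exists_nat_mul_eq_natCast {ι : Type*} (T : Finset ι) {c : ι → ℚ}
    (hc : ∀ i ∈ T, 0 ≤ c i) : ∃ N : ℕ, N ≠ 0 ∧ ∀ i ∈ T, ∃ k : ℕ, c i * N = k := by
  refine ⟨∏ i ∈ T, (c i).den, prod_ne_zero_iff.2 fun i _ => (c i).den_nz, fun i hi => ?_⟩
  obtain ⟨t, ht⟩ := dvd_prod_of_mem (fun i => (c i).den) hi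
  refine ⟨(c i).num.toNat * t, ?_⟩
  have hnum : (((c i).num.toNat : ℤ) : ℚ) = (c i).num := by
    rw [Int.toNat_of_nonneg (Rat.num_nonneg.mpr (hc i hi))]
  rw [ht]
  push_cast
  rw [← mul_assoc, Rat.mul_den_eq_num, ← hnum, Int.cast_natCast]

theorem exists_nsmul_mem_closure_of_castZ_mem_coneHull {n : ℕ} {s : Set (Fin n → ℤ)}
    {m : Fin n → ℤ} (h : castZ m ∈ coneHull (castZ '' s)) :
    ∃ N : ℕ, N ≠ 0 ∧ N • m ∈ AddSubmonoid.closure s := by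
  obtain ⟨T, c, hTs, hc, hm⟩ := h
  choose! w hws hw using fun x (hx : x ∈ (T : Set (Fin n → ℚ))) => hTs hx
  obtain ⟨N, hN, hk⟩ := T.exists_nat_mul_eq_natCast hc
  choose! k hk using hk
  have hNm : N • m = ∑ x ∈ T, k x • w x := by
    funext i
    apply Int.cast_injective (α := ℚ)
    have hmi := congrFun hm i
    simp only [castZ, Finset.sum_apply, Pi.smul_apply, smul_eq_mul] at hmi
    simp only [Pi.smul_apply, Finset.sum_apply, Int.cast_sum, nsmul_eq_mul, Int.cast_mul,
      Int.cast_natCast, Pi.mul_apply, Pi.natCast_apply, hmi, Finset.mul_sum]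
    refine Finset.sum_congr rfl fun x hx => ?_
    have hwi : ((w x i : ℤ) : ℚ) = x i := congrFun (hw x hx) i
    rw [hwi, ← hk x hx]
    ring
  refine ⟨N, hN, hNm ▸ ?_⟩
  exact AddSubmonoid.sum_mem _ fun x hx =>
    AddSubmonoid.nsmul_mem _ (AddSubmonoid.subset_closure (hws x hx)) _

open IsDedekindDomain in
theorem stmt7_general {n : ℕ}
    (A₀ : Type*) [CommRing A₀]
    (K₀ : Type*) [Field K₀] [Algebra A₀ K₀] [IsFractionRing A₀ K₀]
    (σ : Set (Fin n → ℚ))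
    (Am : (Fin n → ℤ) → Submodule A₀ K₀)
    (S : Subalgebra A₀ (AddMonoidAlgebra K₀ (Fin n → ℤ)))
    -- `S` is the `M`-graded subalgebra with pieces `A_m ⊆ K₀`
    (hmem : ∀ f : AddMonoidAlgebra K₀ (Fin n → ℤ), f ∈ S ↔ ∀ m : Fin n → ℤ, f.coeff m ∈ Am m)
    -- all weights lie in `σ^∨`, and the weights generate the cone `σ^∨`
    (hgen : dualCone σ ⊆ coneHull {v | ∃ m : Fin n → ℤ, Am m ≠ ⊥ ∧ v = castZ m})
    -- `S` is normal and Noetherian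
    (hnormal : IsIntegrallyClosed S)
    -- `S` has the same fraction field as `K₀[M]`
    (hfrac : ∀ f : AddMonoidAlgebra K₀ (Fin n → ℤ), ∃ a b : AddMonoidAlgebra K₀ (Fin n → ℤ),
      a ∈ S ∧ b ∈ S ∧ b ≠ 0 ∧ f * b = a) :
    ∀ m : Fin n → ℤ, castZ m ∈ dualCone σ → Am m ≠ ⊥ := by
  intro m hm
  have hweights : {v | ∃ m : Fin n → ℤ, Am m ≠ ⊥ ∧ v = castZ m} = castZ '' weightMonoid S := by
    ext v
    simp only [Set.mem_ofPred_eq, Set.mem_image, SetLike.mem_coe, mem_weightMonoid_iff hmem,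
      eq_comm]
  obtain ⟨N, hN, hNm⟩ := exists_nsmul_mem_closure_of_castZ_mem_coneHull (hweights ▸ hgen hm)
  rw [AddSubmonoid.closure_eq] at hNm
  exact (mem_weightMonoid_iff hmem).1 (mem_weightMonoid_of_nsmul_mem S hfrac hN hNm)

open IsDedekindDomain in
/-- Let `A₀` be a Dedekind domain with fraction field `K₀`, `σ ⊆ N_ℚ` a
strongly convex polyhedral cone with full-dimensional dual `σ^∨`, and
`A = ⊕_{m∈σ^∨∩M} A_m χ^m ⊆ K₀[M]` a normal Noetherian `M`-graded `A₀`-subalgebra with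
weight cone `σ^∨` and `Frac A = Frac K₀[M]`. Then `A_m ≠ 0` for every `m ∈ σ^∨ ∩ M`. -/
theorem stmt7 {n : ℕ}
    (A₀ : Type*) [CommRing A₀] [IsDedekindDomain A₀] (hnf : ¬ IsField A₀)
    (K₀ : Type*) [Field K₀] [Algebra A₀ K₀] [IsFractionRing A₀ K₀]
    (σ : Set (Fin n → ℚ)) (hσpoly : IsPolyhedralCone σ) (hσconv : IsStronglyConvex σ)
    (Am : (Fin n → ℤ) → Submodule A₀ K₀)
    (S : Subalgebra A₀ (AddMonoidAlgebra K₀ (Fin n → ℤ)))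
    -- `S` is the `M`-graded subalgebra with pieces `A_m ⊆ K₀`
    (hmem : ∀ f : AddMonoidAlgebra K₀ (Fin n → ℤ), f ∈ S ↔ ∀ m : Fin n → ℤ, f.coeff m ∈ Am m)
    -- all weights lie in `σ^∨`, and the weights generate the cone `σ^∨`
    (hsupp : ∀ m : Fin n → ℤ, Am m ≠ ⊥ → castZ m ∈ dualCone σ)
    (hgen : dualCone σ ⊆ coneHull {v | ∃ m : Fin n → ℤ, Am m ≠ ⊥ ∧ v = castZ m})
    -- `S` is normal and Noetherian
    (hnormal : IsIntegrallyClosed S) (hnoeth : IsNoetherianRing S)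
    -- `S` has the same fraction field as `K₀[M]`
    (hfrac : ∀ f : AddMonoidAlgebra K₀ (Fin n → ℤ), ∃ a b : AddMonoidAlgebra K₀ (Fin n → ℤ),
      a ∈ S ∧ b ∈ S ∧ b ≠ 0 ∧ f * b = a) :
    ∀ m : Fin n → ℤ, castZ m ∈ dualCone σ → Am m ≠ ⊥ :=
  stmt7_general A₀ K₀ σ Am S hmem hgen hnormal hfrac
end

section
/- Let A be an M-graded normal domain (M a lattice) with weight cone σ^∨, and let L ⊆ M_ℚ be a polyhedral cone contained in σ^∨. Then the subalgebra A_L = ⊕_{m ∈ L ∩ M} A_m is normal (integrally closed in its fraction field). -/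
open scoped Pointwise

/-!
Since `A_L ⊆ A` and `A` is normal, it suffices to show that an element `s ∈ A` integral over
`A_L` has all its weights in `L`. By Farkas' lemma the polyhedral cone `L` is the intersection of
the half-spaces `φ ≥ 0` containing it, and for such a linear form `φ` every element of `A_L` has
only monomials of nonnegative `φ`-weight. If `s` had a monomial of negative `φ`-weight, let `μ < 0`
be the least one: in an integral equation `s ^ k = -∑_{i<k} c_i s ^ i` the weight-`k • μ` component
of the left side is the `k`-th power of the nonzero weight-`μ` component of `s`, whereas every
monomial on the right has weight at least `i • μ > k • μ`.
-/

namespace AddMonoidAlgebra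

variable {R G Γ : Type*} [CommRing R] [AddCommMonoid G]

theorem exists_weight_eq_add_of_mem_support_mul [AddCommMonoid Γ] {w : G →+ Γ} {p q : R[G]}
    {m : G} (hm : m ∈ (p * q).coeff.support) :
    ∃ a ∈ p.coeff.support, ∃ b ∈ q.coeff.support, w m = w a + w b := by
  classical
  obtain ⟨a, ha, b, hb, rfl⟩ := Finset.mem_add.1 (support_coeff_mul_subset p q hm)
  exact ⟨a, ha, b, hb, map_add w a b⟩

theorem weight_eq_zero_of_mem_support_one [AddCommMonoid Γ] {w : G →+ Γ} {m : G}
    (hm : m ∈ (1 : R[G]).coeff.support) : w m = 0 := by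
  rw [Finset.mem_zero.1 (support_coeff_one_subset hm), map_zero]

variable [AddCommGroup Γ] [LinearOrder Γ] (w : G →+ Γ)

def weightGE (μ : Γ) : Set R[G] := {p | ∀ m ∈ p.coeff.support, μ ≤ w m}

variable (R) in
noncomputable def weightPart (μ : Γ) : R[G] →+ R[G] :=
  coeffAddEquiv.symm.toAddMonoidHom.comp
    ((Finsupp.filterAddHom (w · = μ)).comp coeffAddEquiv.toAddMonoidHom)

variable {w}

theorem coeff_weightPart (μ : Γ) (p : R[G]) :
    (weightPart R w μ p).coeff = p.coeff.filter (w · = μ) :=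
  rfl

theorem mem_support_weightPart {μ : Γ} {p : R[G]} {m : G} :
    m ∈ (weightPart R w μ p).coeff.support ↔ m ∈ p.coeff.support ∧ w m = μ := by
  rw [coeff_weightPart, Finsupp.support_filter, Finset.mem_filter]

theorem one_mem_weightGE_zero : (1 : R[G]) ∈ weightGE w 0 := fun _ hm =>
  (weight_eq_zero_of_mem_support_one hm).ge

theorem weightPart_eq_zero {μ : Γ} {p : R[G]} (h : ∀ m ∈ p.coeff.support, w m ≠ μ) :
    weightPart R w μ p = 0 := by
  refine coeff_injective (Finsupp.support_eq_empty.1 (Finset.eq_empty_of_forall_notMem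
    fun m hm => ?_))
  rw [mem_support_weightPart] at hm
  exact h m hm.1 hm.2

theorem weightPart_eq_self {μ : Γ} {p : R[G]} (h : ∀ m ∈ p.coeff.support, w m = μ) :
    weightPart R w μ p = p :=
  coeff_injective ((Finsupp.filter_eq_self_iff _ _).2 fun m hm => h m (by simpa using hm))

theorem weightPart_ne_zero {p : R[G]} {m : G} (hm : m ∈ p.coeff.support) :
    weightPart R w (w m) p ≠ 0 := fun h => by
  simpa [h] using (mem_support_weightPart (w := w)).2 ⟨hm, rfl⟩

theorem weightPart_eq_zero_of_lt {μ ν : Γ} {p : R[G]} (hp : p ∈ weightGE w ν) (h : μ < ν) :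
    weightPart R w μ p = 0 :=
  weightPart_eq_zero fun m hm => (h.trans_le (hp m hm)).ne'

theorem lt_of_mem_support_sub_weightPart {μ : Γ} {p : R[G]} (hp : p ∈ weightGE w μ) {m : G}
    (hm : m ∈ (p - weightPart R w μ p).coeff.support) : μ < w m := by
  rw [coeff_sub, coeff_weightPart, Finsupp.mem_support_iff, Finsupp.sub_apply,
    Finsupp.filter_apply] at hm
  split_ifs at hm with h
  · exact absurd (sub_self _) hm
  · exact (hp m (by simpa using hm)).lt_of_ne (Ne.symm h)

variable [IsOrderedAddMonoid Γ]

theorem mul_mem_weightGE {p q : R[G]} {μ ν : Γ} (hp : p ∈ weightGE w μ) (hq : q ∈ weightGE w ν) :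
    p * q ∈ weightGE w (μ + ν) := fun m hm => by
  obtain ⟨a, ha, b, hb, hm⟩ := exists_weight_eq_add_of_mem_support_mul (w := w) hm
  exact hm ▸ add_le_add (hp a ha) (hq b hb)

theorem pow_mem_weightGE {p : R[G]} {μ : Γ} (hp : p ∈ weightGE w μ) (k : ℕ) :
    p ^ k ∈ weightGE w (k • μ) := by
  induction k with
  | zero => simpa using one_mem_weightGE_zero
  | succ k ih => simpa [pow_succ, succ_nsmul] using mul_mem_weightGE ih hp

theorem weightPart_mul {μ ν : Γ} {p q : R[G]} (hp : p ∈ weightGE w μ) (hq : q ∈ weightGE w ν) :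
    weightPart R w (μ + ν) (p * q) = weightPart R w μ p * weightPart R w ν q := by
  set p₀ := weightPart R w μ p
  set q₀ := weightPart R w ν q
  have hsplit : p * q = p₀ * q₀ + (p₀ * (q - q₀) + (p - p₀) * q) := by ring
  have h₀₀ : weightPart R w (μ + ν) (p₀ * q₀) = p₀ * q₀ := weightPart_eq_self fun m hm => by
    obtain ⟨a, ha, b, hb, hm⟩ := exists_weight_eq_add_of_mem_support_mul (w := w) hm
    rw [hm, (mem_support_weightPart.1 ha).2, (mem_support_weightPart.1 hb).2]
  have h₀₁ : weightPart R w (μ + ν) (p₀ * (q - q₀)) = 0 := weightPart_eq_zero fun m hm => by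
    obtain ⟨a, ha, b, hb, hm⟩ := exists_weight_eq_add_of_mem_support_mul (w := w) hm
    rw [hm, (mem_support_weightPart.1 ha).2]
    exact (add_lt_add_of_le_of_lt le_rfl (lt_of_mem_support_sub_weightPart hq hb)).ne'
  have h₁ : weightPart R w (μ + ν) ((p - p₀) * q) = 0 := weightPart_eq_zero fun m hm => by
    obtain ⟨a, ha, b, hb, hm⟩ := exists_weight_eq_add_of_mem_support_mul (w := w) hm
    rw [hm]
    exact (add_lt_add_of_lt_of_le (lt_of_mem_support_sub_weightPart hp ha) (hq b hb)).ne'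
  rw [hsplit, map_add, map_add, h₀₀, h₀₁, h₁, add_zero, add_zero]

theorem weightPart_pow {μ : Γ} {p : R[G]} (hp : p ∈ weightGE w μ) (k : ℕ) :
    weightPart R w (k • μ) (p ^ k) = weightPart R w μ p ^ k := by
  induction k with
  | zero =>
    rw [zero_nsmul, pow_zero, pow_zero]
    exact weightPart_eq_self fun _ => weight_eq_zero_of_mem_support_one
  | succ k ih => rw [pow_succ, succ_nsmul, weightPart_mul (pow_mem_weightGE hp k) hp, ih, pow_succ]

theorem mem_weightGE_zero_of_isIntegral [NoZeroDivisors R[G]] {A : Subring R[G]}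
    (hA : ∀ a ∈ A, a ∈ weightGE w 0) {s : R[G]} (hs : IsIntegral A s) : s ∈ weightGE w 0 := by
  by_contra hs0
  obtain ⟨m, hm, hwm⟩ : ∃ m ∈ s.coeff.support, w m < 0 := by simpa [weightGE] using hs0
  obtain ⟨m₀, hm₀, hmin⟩ := s.coeff.support.exists_min_image w ⟨m, hm⟩
  have hμ : w m₀ < 0 := (hmin m hm).trans_lt hwm
  obtain ⟨P, hPmonic, hPs⟩ := hs
  have heq : s ^ P.natDegree = -∑ i ∈ Finset.range P.natDegree, (P.coeff i : R[G]) * s ^ i := by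
    rw [Polynomial.eval₂_eq_sum_range, Finset.sum_range_succ, hPmonic.coeff_natDegree, map_one,
      one_mul] at hPs
    exact eq_neg_of_add_eq_zero_right hPs
  -- compare the components of weight `natDegree P • w m₀` on both sides of `heq`
  apply pow_ne_zero P.natDegree (weightPart_ne_zero (w := w) hm₀)
  rw [← weightPart_pow hmin, heq, map_neg, map_sum, neg_eq_zero]
  refine Finset.sum_eq_zero fun i hi => weightPart_eq_zero_of_lt
    (by simpa using mul_mem_weightGE (hA _ (P.coeff i).2) (pow_mem_weightGE hmin i)) ?_
  simpa using nsmul_lt_nsmul_left (neg_pos.2 hμ) (Finset.mem_range.1 hi)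

end AddMonoidAlgebra

theorem Subring.isIntegrallyClosed_of_le {D : Type*} [CommRing D] [IsDomain D] {T S : Subring D}
    (hTS : T ≤ S) [IsIntegrallyClosed S] (h : ∀ x ∈ S, IsIntegral T x → x ∈ T) :
    IsIntegrallyClosed T := by
  let : Algebra T S := (Subring.inclusion hTS).toAlgebra
  have hinj : Function.Injective (algebraMap T S) := Subring.inclusion_injective hTS
  have : FaithfulSMul T S := (faithfulSMul_iff_algebraMap_injective T S).2 hinj
  have : IsIntegrallyClosedIn T S := isIntegrallyClosedIn_iff.2 ⟨hinj, fun {x} hx =>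
    ⟨⟨x, h x x.2 (hx.map ({ S.subtype with commutes' := fun _ => rfl } : S →ₐ[T] D))⟩, rfl⟩⟩
  exact IsIntegrallyClosed.of_isIntegrallyClosed_of_isIntegrallyClosedIn T S

section Farkas

variable {𝕜 M ι : Type*} [Field 𝕜] [LinearOrder 𝕜] [IsStrictOrderedRing 𝕜]
  [AddCommGroup M] [Module 𝕜 M]

theorem Module.exists_dual_apply_neg_of_ne_zero {x : M} (hx : x ≠ 0) :
    ∃ f : Module.Dual 𝕜 M, f x < 0 := by
  obtain ⟨f, hf⟩ : ∃ f : Module.Dual 𝕜 M, f x ≠ 0 := by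
    by_contra! h
    exact hx ((Module.forall_dual_apply_eq_zero_iff 𝕜 x).mp h)
  rcases hf.lt_or_gt with h | h
  · exact ⟨f, h⟩
  · exact ⟨-f, by simpa using h⟩

/-- Farkas' lemma, proved by eliminating one generator at a time (Fourier–Motzkin). -/
theorem PointedCone.mem_hull_image_or_exists_dual (s : Finset ι) (v : ι → M) (x : M) :
    x ∈ hull 𝕜 (v '' s) ∨ ∃ f : Module.Dual 𝕜 M, (∀ i ∈ s, 0 ≤ f (v i)) ∧ f x < 0 := by
  classical
  induction s using Finset.induction_on generalizing v x with
  | empty =>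
    by_cases hx : x = 0
    · exact .inl (hx ▸ zero_mem _)
    · obtain ⟨f, hf⟩ := Module.exists_dual_apply_neg_of_ne_zero (𝕜 := 𝕜) hx
      exact .inr ⟨f, by simp, hf⟩
  | insert a t ha ih =>
    have hva : v a ∈ hull 𝕜 (v '' ↑(insert a t)) := subset_hull ⟨a, by simp, rfl⟩
    obtain hx | ⟨f, hft, hfx⟩ := ih v x
    · exact .inl (Submodule.span_mono (Set.image_mono (by simp)) hx)
    by_cases hfa : 0 ≤ f (v a)
    · exact .inr ⟨f, by simpa [hfa] using hft, hfx⟩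
    push Not at hfa
    -- project along `v a` onto `ker f` and recurse on the projected generators
    let π : M →ₗ[𝕜] M := LinearMap.id - (f (v a))⁻¹ • f.smulRight (v a)
    have hπ : ∀ y, π y = y - (f y / f (v a)) • v a := fun y => by
      simp [π, div_eq_inv_mul, mul_smul]
    obtain hx' | ⟨g, hgt, hgx⟩ := ih (π ∘ v) (π x)
    · left
      have hle : hull 𝕜 ((π ∘ v) '' t) ≤ hull 𝕜 (v '' ↑(insert a t)) := by
        rw [Submodule.span_le]
        rintro _ ⟨i, hi, rfl⟩
        rw [Function.comp_apply, hπ, sub_eq_add_neg, ← neg_smul]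
        exact add_mem (subset_hull ⟨i, by simp [hi], rfl⟩)
          (smul_mem _ (neg_nonneg.2 (div_nonpos_of_nonneg_of_nonpos (hft i hi) hfa.le)) hva)
      rw [show x = π x + (f x / f (v a)) • v a by rw [hπ]; abel]
      exact add_mem (hle hx') (smul_mem _ (div_pos_of_neg_of_neg hfx hfa).le hva)
    · refine .inr ⟨g ∘ₗ π, fun i hi => ?_, hgx⟩
      rcases Finset.mem_insert.1 hi with rfl | hi
      · simp [hπ, hfa.ne]
      · exact hgt i hi

end Farkas

theorem coneHull_eq_hull {n : ℕ} (S : Finset (Fin n → ℚ)) :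
    coneHull (S : Set (Fin n → ℚ)) = PointedCone.hull ℚ (S : Set (Fin n → ℚ)) := by
  ext v
  constructor
  · rintro ⟨T, c, hTS, hc, rfl⟩
    exact sum_mem fun x hx => PointedCone.smul_mem _ (hc x hx) (PointedCone.subset_hull (hTS hx))
  · intro hv
    obtain ⟨c, -, rfl⟩ := Submodule.mem_span_finset.1 hv
    exact ⟨S, fun x => c x, subset_rfl, fun x _ => (c x).2, rfl⟩

theorem IsPolyhedralCone.mem_of_forall_dual_nonneg {n : ℕ} {L : Set (Fin n → ℚ)}
    (hL : IsPolyhedralCone L) {x : Fin n → ℚ}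
    (hx : ∀ f : Module.Dual ℚ (Fin n → ℚ), (∀ u ∈ L, 0 ≤ f u) → 0 ≤ f x) : x ∈ L := by
  obtain ⟨Q, rfl⟩ := hL
  rw [coneHull_eq_hull] at hx ⊢
  rcases PointedCone.mem_hull_image_or_exists_dual (𝕜 := ℚ) Q id x with h | ⟨f, hfQ, hfx⟩
  · simpa using h
  · have hf : f ∈ PointedCone.dual (Module.Dual.eval ℚ _) (Q : Set (Fin n → ℚ)) := hfQ
    rw [← PointedCone.dual_hull] at hf
    exact absurd (hx f fun u hu => hf hu) hfx.not_ge

theorem stmt8_general {n : ℕ}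
    (K₀ : Type*) [Field K₀]
    (S : Subring (AddMonoidAlgebra K₀ (Fin n → ℤ)))
    -- `A` is normal
    (hnormal : IsIntegrallyClosed S)
    -- `L` is a polyhedral cone contained in `σ^∨`
    (L : Set (Fin n → ℚ)) (hLpoly : IsPolyhedralCone L)
    -- `T` is the graded subring `A_L = ⊕_{m ∈ L∩M} A_m χ^m`
    (T : Subring (AddMonoidAlgebra K₀ (Fin n → ℤ)))
    (hmemT : ∀ f : AddMonoidAlgebra K₀ (Fin n → ℤ),
      f ∈ T ↔ f ∈ S ∧ ∀ m : Fin n → ℤ, f.coeff m ≠ 0 → castZ m ∈ L) :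
    IsIntegrallyClosed T := by
  have hTS : T ≤ S := fun f hf => ((hmemT f).1 hf).1
  refine Subring.isIntegrallyClosed_of_le hTS fun s hs hint => (hmemT s).2 ⟨hs, fun m hm => ?_⟩
  refine hLpoly.mem_of_forall_dual_nonneg fun φ hφ => ?_
  let w : (Fin n → ℤ) →+ ℚ :=
    φ.toAddMonoidHom.comp (AddMonoidHom.compLeft (Int.castAddHom ℚ) (Fin n))
  have hTw : ∀ f ∈ T, f ∈ AddMonoidAlgebra.weightGE w 0 := fun f hf m' hm' =>
    hφ _ (((hmemT f).1 hf).2 m' (Finsupp.mem_support_iff.1 hm'))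
  exact AddMonoidAlgebra.mem_weightGE_zero_of_isIntegral hTw hint m (Finsupp.mem_support_iff.2 hm)

/-- Let `A = ⊕_{m∈σ^∨∩M} A_m χ^m ⊆ K₀[M]` be an `M`-graded normal domain
with weight cone `σ^∨` and let `L ⊆ σ^∨` be a polyhedral cone. Then the subalgebra
`A_L = ⊕_{m∈L∩M} A_m χ^m` is normal (integrally closed in its fraction field). -/
theorem stmt8 {n : ℕ}
    (K₀ : Type*) [Field K₀]
    (σ : Set (Fin n → ℚ)) (hσpoly : IsPolyhedralCone σ) (hσconv : IsStronglyConvex σ)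
    (Am : (Fin n → ℤ) → Set K₀)
    (S : Subring (AddMonoidAlgebra K₀ (Fin n → ℤ)))
    -- `S` is the `M`-graded subring with pieces `A_m ⊆ K₀`
    (hmem : ∀ f : AddMonoidAlgebra K₀ (Fin n → ℤ), f ∈ S ↔ ∀ m : Fin n → ℤ, f.coeff m ∈ Am m)
    -- all weights lie in the weight cone `σ^∨`
    (hsupp : ∀ m : Fin n → ℤ, Am m ≠ {0} → castZ m ∈ dualCone σ)
    -- `A` is normal
    (hnormal : IsIntegrallyClosed S)
    -- `L` is a polyhedral cone contained in `σ^∨`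
    (L : Set (Fin n → ℚ)) (hLpoly : IsPolyhedralCone L) (hL : L ⊆ dualCone σ)
    -- `T` is the graded subring `A_L = ⊕_{m ∈ L∩M} A_m χ^m`
    (T : Subring (AddMonoidAlgebra K₀ (Fin n → ℤ)))
    (hmemT : ∀ f : AddMonoidAlgebra K₀ (Fin n → ℤ),
      f ∈ T ↔ f ∈ S ∧ ∀ m : Fin n → ℤ, f.coeff m ≠ 0 → castZ m ∈ L) :
    IsIntegrallyClosed T :=
  stmt8_general K₀ S hnormal L hLpoly T hmemT
end

section
/- Let σ ⊆ N_ℚ ≅ ℚⁿ be a strongly convex polyhedral cone with dual σ^∨, and P an integral σ^∨-polyhedron contained in σ^∨ (i.e. P = Q + σ^∨ with Q a polytope with vertices in the lattice M). Then for every integer e ≥ n − 1, the polyhedron eP is normal: every lattice point of k·(eP) is a sum of k lattice points of eP, for all k ≥ 1. -/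
/-!
Write a lattice point `x` of `N • (conv Q + C)`, `N = k e`, as `x = ∑ μᵢ zᵢ + w` with `zᵢ ∈ Q`,
`μᵢ ≥ 0`, `∑ μᵢ = N` and `w ∈ C`. Moving `μ` along a linear relation among the `zᵢ` with
`μᵢ ∉ ℤ` fixes `∑ μᵢ zᵢ`, can be made not to decrease the mass `∑ μᵢ`, and makes one more `μᵢ`
integral. So we may assume that those `zᵢ` are linearly independent; then at most `n` of the
`μᵢ` are non-integral and `∑ ⌊μᵢ⌋ > N - n`, i.e. `∑ ⌊μᵢ⌋ ≥ N - e`. Peel off `k - 1` integral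
combinations of mass `e`: each is a lattice point of `e • conv Q`, and what remains is a lattice
point of mass at least `e`. Any combination of mass `m ≥ e` lies in `e • (conv Q + C)`, since the
surplus `(m - e)/m` of it lies in `C ⊇ Q`.
-/

open scoped Pointwise

/-- The `e`-fold dilation `eP` of a polyhedron `P` with recession cone `ω`, with the
convention `0·P = ω`. -/
noncomputable def dilate {n : ℕ} (ω P : Set (Fin n → ℚ)) (e : ℕ) : Set (Fin n → ℚ) :=
  if e = 0 then ω else (e : ℚ) • P

open Finset

section Rounding
variable {ι : Type*} [Fintype ι]

lemma exists_le_sum_eq_of_le_sum (b : ι → ℕ) {e : ℕ} (h : e ≤ ∑ i, b i) :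
    ∃ a ≤ b, ∑ i, a i = e := by
  classical
  induction e with
  | zero => exact ⟨0, fun _ => Nat.zero_le _, by simp⟩
  | succ e ih =>
    obtain ⟨a, hab, rfl⟩ := ih (by omega)
    obtain ⟨i, hi⟩ : ∃ i, a i < b i := by
      by_contra! hba
      exact absurd (sum_le_sum (s := univ) fun i _ => hba i) (by omega)
    refine ⟨a + Pi.single i 1, fun j => ?_, by simp [sum_add_distrib]⟩
    rcases eq_or_ne j i with rfl | hj
    · simpa using hi
    · simpa [hj] using hab j

lemma exists_nonneg_add_smul_fract_eq_zero (μ c : ι → ℚ) (hμ : 0 ≤ μ) (hc : c ≠ 0) :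
    ∃ τ : ℚ, 0 ≤ τ ∧ 0 ≤ μ + τ • c ∧ ∃ i, c i ≠ 0 ∧ Int.fract ((μ + τ • c) i) = 0 := by
  -- `t i` is the first time `s ≥ 0` at which `μ i + s * c i` is an integer
  let t : ι → ℚ := fun i => if 0 < c i then Int.fract (-μ i) / c i else Int.fract (μ i) / -c i
  obtain ⟨i₀, hi₀, hmin⟩ := (univ.filter (c · ≠ 0)).exists_min_image t
    (by simpa [Function.ne_iff, Finset.Nonempty] using hc)
  have ht : ∀ i, 0 ≤ t i := fun i => by
    by_cases hci : 0 < c i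
    · simp only [t, if_pos hci]; exact div_nonneg (Int.fract_nonneg _) hci.le
    · simp only [t, if_neg hci]
      exact div_nonneg (Int.fract_nonneg _) (by linarith)
  refine ⟨t i₀, ht i₀, fun i => ?_, i₀, (mem_filter.1 hi₀).2, ?_⟩
  · rcases lt_trichotomy (c i) 0 with hci | hci | hci
    · have hle : t i₀ * -c i ≤ Int.fract (μ i) := by
        have := hmin i (by simp [hci.ne])
        simp only [t, if_neg hci.not_gt] at this
        rwa [le_div_iff₀ (by linarith)] at this
      have hfloor : (0 : ℚ) ≤ ⌊μ i⌋ := by exact_mod_cast Int.floor_nonneg.2 (hμ i)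
      simp only [Pi.add_apply, Pi.smul_apply, smul_eq_mul, Pi.zero_apply]
      linarith [Int.floor_add_fract (μ i)]
    · simpa [hci] using hμ i
    · simp only [Pi.add_apply, Pi.smul_apply, smul_eq_mul, Pi.zero_apply]
      exact add_nonneg (hμ i) (mul_nonneg (ht i₀) hci.le)
  · have hc₀ := (mem_filter.1 hi₀).2
    simp only [Pi.add_apply, Pi.smul_apply, smul_eq_mul, t]
    split_ifs with hpos
    · have : μ i₀ + Int.fract (-μ i₀) = ((-⌊-μ i₀⌋ : ℤ) : ℚ) := by
        rw [Int.fract]; push_cast; ring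
      rw [div_mul_cancel₀ _ hc₀, this, Int.fract_intCast]
    · have : μ i₀ + Int.fract (μ i₀) / -c i₀ * c i₀ = (⌊μ i₀⌋ : ℚ) := by
        rw [div_neg, neg_mul, div_mul_cancel₀ _ hc₀, ← sub_eq_add_neg, Int.self_sub_fract]
      rw [this, Int.fract_intCast]

def fractSupport (μ : ι → ℚ) : Finset ι := {i | Int.fract (μ i) ≠ 0}

lemma sub_le_sum_floor_of_card_fractSupport_le {μ : ι → ℚ} (hμ : 0 ≤ μ) {N : ℤ}
    (hN : N ≤ ∑ i, μ i) {m : ℕ} (hm : #(fractSupport μ) ≤ m + 1) : N - m ≤ ∑ i, (⌊μ i⌋₊ : ℤ) := by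
  have hfract : ∑ i, Int.fract (μ i) < m + 1 := by
    rw [← sum_filter_ne_zero]
    rcases (fractSupport μ).eq_empty_or_nonempty with h | h
    · rw [fractSupport] at h
      simp only [h, sum_empty]
      positivity
    · calc ∑ i ∈ fractSupport μ, Int.fract (μ i) < ∑ i ∈ fractSupport μ, 1 :=
            sum_lt_sum_of_nonempty h fun i _ => Int.fract_lt_one _
        _ = #(fractSupport μ) := by simp
        _ ≤ m + 1 := by exact_mod_cast hm
  have hfloor : ∑ i, ((⌊μ i⌋₊ : ℤ) : ℚ) = ∑ i, μ i - ∑ i, Int.fract (μ i) := by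
    rw [← sum_sub_distrib]
    exact sum_congr rfl fun i _ => by
      rw [Int.natCast_floor_eq_floor (hμ i), Int.self_sub_fract]
  have : ((N - m - 1 : ℤ) : ℚ) < ((∑ i, (⌊μ i⌋₊ : ℤ) : ℤ) : ℚ) := by
    push_cast at hfloor ⊢
    linarith
  have := Int.cast_lt.1 this
  omega

end Rounding

section Reweighting
variable {ι E : Type*} [Fintype ι] [AddCommGroup E] [Module ℚ E]

lemma exists_reweight_of_not_linearIndepOn (z : ι → E) {μ : ι → ℚ} (hμ : 0 ≤ μ)
    (hdep : ¬ LinearIndepOn ℚ z (fractSupport μ : Set ι)) :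
    ∃ μ', 0 ≤ μ' ∧ ∑ i, μ' i • z i = ∑ i, μ i • z i ∧ ∑ i, μ i ≤ ∑ i, μ' i ∧
      fractSupport μ' ⊂ fractSupport μ := by
  obtain ⟨c, hcS, hcz, hc, hcsum⟩ : ∃ c : ι → ℚ, (∀ i ∉ fractSupport μ, c i = 0) ∧
      ∑ i, c i • z i = 0 ∧ c ≠ 0 ∧ 0 ≤ ∑ i, c i := by
    rw [linearIndepOn_iff''] at hdep
    push Not at hdep
    obtain ⟨t, g, hts, hgt, hgz, i, hit, hgi⟩ := hdep
    have hsum : ∑ i, g i • z i = 0 := by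
      rw [← hgz]
      exact (sum_subset (subset_univ t) fun i _ hi => by simp [hgt i hi]).symm
    have hsupp : ∀ i ∉ fractSupport μ, g i = 0 := fun i hi => hgt i fun hit => hi (hts hit)
    have hg : g ≠ 0 := fun h => hgi (by simp [h])
    rcases le_total 0 (∑ i, g i) with h | h
    · exact ⟨g, hsupp, hsum, hg, h⟩
    · exact ⟨-g, by simpa using hsupp, by simp [neg_smul, hsum], neg_ne_zero.2 hg,
        by simpa using h⟩
  obtain ⟨τ, hτ, hμ', i₀, hci₀, hi₀⟩ := exists_nonneg_add_smul_fract_eq_zero μ c hμ hc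
  refine ⟨μ + τ • c, hμ', ?_, ?_, ?_⟩
  · simp [add_smul, sum_add_distrib, mul_smul, ← smul_sum, hcz]
  · simp only [Pi.add_apply, Pi.smul_apply, smul_eq_mul, sum_add_distrib, ← mul_sum]
    exact le_add_of_nonneg_right (mul_nonneg hτ hcsum)
  · refine ssubset_iff_of_subset (fun i hi => ?_) |>.2
      ⟨i₀, of_not_not (hci₀ ∘ hcS i₀), by simpa [fractSupport] using hi₀⟩
    by_contra h
    simp_all [fractSupport]

lemma exists_reweight_linearIndepOn (z : ι → E) {μ : ι → ℚ} (hμ : 0 ≤ μ) :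
    ∃ μ', 0 ≤ μ' ∧ ∑ i, μ' i • z i = ∑ i, μ i • z i ∧ ∑ i, μ i ≤ ∑ i, μ' i ∧
      LinearIndepOn ℚ z (fractSupport μ' : Set ι) := by
  induction hS : fractSupport μ using Finset.strongInduction generalizing μ with
  | H S ih =>
    by_cases hind : LinearIndepOn ℚ z (fractSupport μ : Set ι)
    · exact ⟨μ, hμ, rfl, le_rfl, hind⟩
    obtain ⟨μ₁, hμ₁, hz₁, hs₁, hss⟩ := exists_reweight_of_not_linearIndepOn z hμ hind
    obtain ⟨μ₂, hμ₂, hz₂, hs₂, hind₂⟩ := ih _ (hS ▸ hss) hμ₁ rfl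
    exact ⟨μ₂, hμ₂, hz₂.trans hz₁, hs₁.trans hs₂, hind₂⟩

end Reweighting

section Cone
variable {ι E : Type*} [Fintype ι] [AddCommGroup E] [Module ℚ E]
  (C : PointedCone ℚ E) (L : AddSubgroup E) {s : Set E}

lemma sum_smul_add_mem_smul_convexHull_add (hsC : s ⊆ C) {z : ι → E} (hz : ∀ i, z i ∈ s)
    {μ : ι → ℚ} (hμ : 0 ≤ μ) {e : ℚ} (he : 0 < e) (hmass : e ≤ ∑ i, μ i) {w : E} (hw : w ∈ C) :
    ∑ i, μ i • z i + w ∈ e • (convexHull ℚ s + (C : Set E)) := by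
  set m := ∑ i, μ i with hm_def
  have hm : 0 < m := he.trans_le hmass
  have hsum : ∑ i, μ i • z i ∈ C := C.sum_mem fun i _ => C.smul_mem (hμ i) (hsC (hz i))
  -- the surplus mass `m - e` is absorbed by `C`, which contains `s`
  have hsurplus : e⁻¹ • ((1 - e / m) • ∑ i, μ i • z i + w) ∈ C :=
    C.smul_mem (by positivity) (C.add_mem (C.smul_mem
      (sub_nonneg.2 ((div_le_one hm).2 hmass)) hsum) hw)
  refine ⟨univ.centerMass μ z + e⁻¹ • ((1 - e / m) • ∑ i, μ i • z i + w),
    ⟨_, univ.centerMass_mem_convexHull (fun i _ => hμ i) hm fun i _ => hz i, _, hsurplus, rfl⟩,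
    ?_⟩
  simp only [Finset.centerMass, ← hm_def]
  match_scalars
  · field_simp
    ring
  · field_simp

lemma exists_fin_sum_eq_sum_smul_add (hsC : s ⊆ C) (hsL : s ⊆ L) {z : ι → E}
    (hz : ∀ i, z i ∈ s) {e : ℕ} (he : 0 < e) {w : E} (hw : w ∈ C) :
    ∀ (k : ℕ) (μ : ι → ℚ) (b : ι → ℕ), 0 ≤ μ → (∀ i, (b i : ℚ) ≤ μ i) → k * e ≤ ∑ i, b i →
      ((k + 1) * e : ℚ) ≤ ∑ i, μ i → ∑ i, μ i • z i + w ∈ L →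
      ∃ f : Fin (k + 1) → E, (∀ j, f j ∈ L ∧ f j ∈ (e : ℚ) • (convexHull ℚ s + (C : Set E))) ∧
        ∑ j, f j = ∑ i, μ i • z i + w
  | 0, μ, b, hμ, _, _, hmass, hL =>
    ⟨fun _ => _, fun _ => ⟨hL, sum_smul_add_mem_smul_convexHull_add C hsC hz hμ
      (by exact_mod_cast he) (by simpa using hmass) hw⟩, by simp⟩
  | k + 1, μ, b, hμ, hbμ, hb, hmass, hL => by
    obtain ⟨a, hab, ha⟩ := exists_le_sum_eq_of_le_sum b (e := e) (by nlinarith)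
    set m := ∑ i, (a i : ℚ) • z i
    have hmL : m ∈ L := L.sum_mem fun i _ => by
      rw [Nat.cast_smul_eq_nsmul]; exact L.nsmul_mem (hsL (hz i)) _
    have hm : m ∈ (e : ℚ) • (convexHull ℚ s + (C : Set E)) := by
      simpa using sum_smul_add_mem_smul_convexHull_add C hsC hz (μ := fun i => (a i : ℚ))
        (fun i => by positivity) (by exact_mod_cast he) (by exact_mod_cast ha.ge) C.zero_mem
    have hrest : ∑ i, (μ i - a i) • z i + w = ∑ i, μ i • z i + w - m := by
      simp only [sub_smul, sum_sub_distrib, m]; abel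
    have hba : ∑ i, (b - a) i + e = ∑ i, b i := by
      rw [← ha, ← sum_add_distrib]
      exact sum_congr rfl fun i _ => Nat.sub_add_cancel (hab i)
    obtain ⟨f, hf, hfsum⟩ := exists_fin_sum_eq_sum_smul_add hsC hsL hz he hw k
      (fun i => μ i - a i) (b - a)
      (fun i => sub_nonneg.2 ((Nat.cast_le.2 (hab i)).trans (hbμ i)))
      (fun i => by simpa [Nat.cast_sub (hab i)] using hbμ i) (by rw [add_mul] at hb; omega)
      (by simp only [sum_sub_distrib, ← Nat.cast_sum, ha]; push_cast at hmass ⊢; linarith)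
      (hrest ▸ L.sub_mem hL hmL)
    refine ⟨Fin.cons m f, Fin.forall_fin_succ.2 ⟨⟨hmL, hm⟩, hf⟩, ?_⟩
    rw [Fin.sum_cons, hfsum, hrest]
    abel

end Cone

section Normal
variable {E : Type*} [AddCommGroup E] [Module ℚ E] [FiniteDimensional ℚ E]
  (C : PointedCone ℚ E) (L : AddSubgroup E) {s : Set E}

theorem exists_fin_sum_eq_of_mem_smul_convexHull_add (hsC : s ⊆ C) (hsL : s ⊆ L) {e : ℕ}
    (he : 0 < e) (hdim : Module.finrank ℚ E ≤ e + 1) (k : ℕ) {x : E} (hxL : x ∈ L)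
    (hx : x ∈ (((k + 1) * e : ℕ) : ℚ) • (convexHull ℚ s + (C : Set E))) :
    ∃ f : Fin (k + 1) → E, (∀ j, f j ∈ L ∧ f j ∈ (e : ℚ) • (convexHull ℚ s + (C : Set E))) ∧
      ∑ j, f j = x := by
  obtain ⟨_, ⟨y, hy, w, hw, rfl⟩, rfl⟩ := Set.mem_smul_set.1 hx
  obtain ⟨ι, _, l, z, hl, hl1, hz, rfl⟩ := mem_convexHull_iff_exists_fintype.1 hy
  set N := (k + 1) * e
  obtain ⟨μ, hμ, hμz, hμN, hind⟩ :=
    exists_reweight_linearIndepOn z (μ := (N : ℚ) • l) fun i => mul_nonneg N.cast_nonneg (hl i)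
  have hcard : #(fractSupport μ) ≤ e + 1 := by
    have := hind.fintype_card_le_finrank
    simp only [Finset.coe_sort_coe, Fintype.card_coe] at this
    omega
  have hNμ : (N : ℤ) ≤ ∑ i, μ i := by
    simpa [← mul_sum, hl1] using hμN
  have hb : k * e ≤ ∑ i, ⌊μ i⌋₊ := by
    have := sub_le_sum_floor_of_card_fractSupport_le hμ hNμ hcard
    zify
    push_cast [N] at this
    linarith
  have hmass : ((k + 1) * e : ℚ) ≤ ∑ i, μ i := by
    push_cast [N] at hNμ
    exact hNμ
  have hx : (N : ℚ) • (∑ i, l i • z i + w) = ∑ i, μ i • z i + (N : ℚ) • w := by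
    simp [hμz, smul_add, smul_sum, smul_smul]
  rw [hx] at hxL ⊢
  exact exists_fin_sum_eq_sum_smul_add C L hsC hsL hz he (C.smul_mem (by positivity) hw) k μ
    (fun i => ⌊μ i⌋₊) hμ (fun i => Nat.floor_le (hμ i)) hb hmass hxL

end Normal

def castZHom (n : ℕ) : (Fin n → ℤ) →+ (Fin n → ℚ) :=
  AddMonoidHom.compLeft (Int.castAddHom ℚ) (Fin n)

@[simp] lemma castZHom_apply {n : ℕ} (v : Fin n → ℤ) : castZHom n v = castZ v := rfl

lemma castZHom_injective (n : ℕ) : Function.Injective (castZHom n) :=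
  Int.cast_injective.comp_left

lemma dualCone_eq_dual {n : ℕ} (σ : Set (Fin n → ℚ)) :
    dualCone σ = PointedCone.dual (dotProductBilin ℚ ℚ).flip σ := by
  ext m
  simp [dualCone, pairQ, dotProduct]

theorem stmt10_general {n : ℕ} (σ : Set (Fin n → ℚ))
    (Q : Finset (Fin n → ℤ))
    (P : Set (Fin n → ℚ))
    (hP : P = convexHull ℚ (castZ '' ↑Q) + dualCone σ)
    (hPsub : P ⊆ dualCone σ) :
    ∀ e : ℕ, (n : ℤ) - 1 ≤ (e : ℤ) →
      ∀ k : ℕ, 1 ≤ k →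
        ∀ v : Fin n → ℤ, castZ v ∈ dilate (dualCone σ) P (k * e) →
          ∃ f : Fin k → (Fin n → ℤ),
            (∀ j, castZ (f j) ∈ dilate (dualCone σ) P e) ∧ v = ∑ j, f j := by
  intro e he k hk v hv
  obtain ⟨k, rfl⟩ := Nat.exists_eq_add_of_le' hk
  rw [dualCone_eq_dual] at hP hPsub hv ⊢
  set C := PointedCone.dual (dotProductBilin ℚ ℚ).flip σ
  rcases Nat.eq_zero_or_pos e with rfl | he₀
  · refine ⟨Pi.single 0 v, fun j => ?_, by simp⟩
    rcases eq_or_ne j 0 with rfl | hj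
    · simpa [dilate] using hv
    · simp [dilate, hj, ← castZHom_apply]
  have hQC : castZ '' (Q : Set (Fin n → ℤ)) ⊆ C := fun q hq =>
    hPsub (by rw [hP]; exact ⟨q, subset_convexHull ℚ _ hq, 0, C.zero_mem, add_zero q⟩)
  rw [dilate, if_neg (by positivity), hP] at hv
  obtain ⟨g, hg, hgv⟩ := exists_fin_sum_eq_of_mem_smul_convexHull_add _ (castZHom n).range hQC
    (by rintro _ ⟨q, -, rfl⟩; exact ⟨q, rfl⟩) he₀ (by simp; omega) k ⟨v, rfl⟩ hv
  choose f hf using fun j => (hg j).1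
  refine ⟨f, fun j => ?_, ?_⟩
  · rw [dilate, if_neg he₀.ne', hP, ← castZHom_apply, hf j]
    exact (hg j).2
  · apply castZHom_injective n
    rw [map_sum]
    simpa [hf] using hgv.symm

/-- Let `σ ⊆ ℚⁿ` be a strongly convex polyhedral cone with dual `σ^∨`, and
`P = Q + σ^∨ ⊆ σ^∨` an integral `σ^∨`-polyhedron (the vertices of `Q` are lattice points).
Then for every integer `e ≥ n − 1` the polyhedron `eP` is normal: for every `k ≥ 1`, every
lattice point of `k·(eP)` is a sum of `k` lattice points of `eP`. -/
theorem stmt10 {n : ℕ} (σ : Set (Fin n → ℚ))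
    (hσpoly : IsPolyhedralCone σ) (hσconv : IsStronglyConvex σ)
    (Q : Finset (Fin n → ℤ)) (hQ : Q.Nonempty)
    (P : Set (Fin n → ℚ))
    (hP : P = convexHull ℚ (castZ '' ↑Q) + dualCone σ)
    (hPsub : P ⊆ dualCone σ) :
    ∀ e : ℕ, (n : ℤ) - 1 ≤ (e : ℤ) →
      ∀ k : ℕ, 1 ≤ k →
        ∀ v : Fin n → ℤ, castZ v ∈ dilate (dualCone σ) P (k * e) →
          ∃ f : Fin k → (Fin n → ℤ),
            (∀ j, castZ (f j) ∈ dilate (dualCone σ) P e) ∧ v = ∑ j, f j :=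
  stmt10_general σ Q P hP hPsub
end

section
/- Let P be an integral ω-polyhedron with ω = σ^∨ a full-dimensional rational cone in M_ℚ. Then the set S_P = {(m,e) ∈ M × ℕ : m ∈ (eP) ∩ M} is a saturated submonoid of M × ℤ, and for every e ≥ 1 the convex hull of E_{[e,P]} = {m₁+…+m_e : m_i ∈ P ∩ M} in M_ℚ equals eP. -/
open scoped Pointwise

section helpers
variable {n : ℕ} {σ : Set (Fin n → ℚ)}

lemma dual_zero : (0 : Fin n → ℚ) ∈ dualCone σ := by
  intro v hv; simp [pairQ]

lemma dual_add {a b : Fin n → ℚ} (ha : a ∈ dualCone σ) (hb : b ∈ dualCone σ) :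
    a + b ∈ dualCone σ := by
  intro v hv
  have h1 := ha v hv; have h2 := hb v hv
  simp only [pairQ, Pi.add_apply, add_mul, Finset.sum_add_distrib] at *
  positivity

lemma dual_smul {c : ℚ} (hc : 0 ≤ c) {a : Fin n → ℚ} (ha : a ∈ dualCone σ) :
    c • a ∈ dualCone σ := by
  intro v hv
  have h : pairQ (c • a) v = c * pairQ a v := by
    simp [pairQ, Finset.mul_sum, mul_assoc]
  rw [h]
  exact mul_nonneg hc (ha v hv)

lemma dual_convex : Convex ℚ (dualCone σ) := fun _ hx _ hy a b ha hb _ =>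
  dual_add (dual_smul ha hx) (dual_smul hb hy)

lemma castZ_add (m m' : Fin n → ℤ) : castZ (m + m') = castZ m + castZ m' := by
  funext i; simp [castZ]

lemma castZ_sum {ι : Type*} (s : Finset ι) (f : ι → Fin n → ℤ) :
    castZ (∑ j ∈ s, f j) = ∑ j ∈ s, castZ (f j) := by
  funext i; simp [castZ, Finset.sum_apply]

lemma castZ_nsmul (d : ℕ) (m : Fin n → ℤ) : castZ (d • m) = (d : ℚ) • castZ m := by
  funext i; simp [castZ]

lemma exists_int_multiple (w : Fin n → ℚ) :
    ∃ (N : ℕ) (m : Fin n → ℤ), 0 < N ∧ castZ m = (N : ℚ) • w := by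
  refine ⟨∏ i, (w i).den, fun i => (w i).num * ∏ j ∈ Finset.univ.erase i, ((w j).den : ℤ),
    Finset.prod_pos (fun i _ => (w i).pos), ?_⟩
  funext i
  have h1 : (∏ j : Fin n, ((w j).den : ℚ))
      = ((w i).den : ℚ) * ∏ j ∈ Finset.univ.erase i, ((w j).den : ℚ) :=
    (Finset.mul_prod_erase Finset.univ _ (Finset.mem_univ i)).symm
  have h2 : ((w i).num : ℚ) = w i * (w i).den := (Rat.mul_den_eq_num (w i)).symm
  simp only [castZ, Pi.smul_apply, smul_eq_mul]
  push_cast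
  rw [h2, h1]
  ring

end helpers

/-- Let `P = Q + ω` be an integral `ω`-polyhedron, `ω = σ^∨` a
full-dimensional rational cone. Then `S_P = {(m,e) : m ∈ (eP) ∩ M}` is a saturated
submonoid of `M × ℤ`, and for every `e ≥ 1` the convex hull of
`E_{[e,P]} = {m₁+…+m_e : mᵢ ∈ P ∩ M}` equals `eP`. -/
theorem stmt12 {n : ℕ} (σ : Set (Fin n → ℚ))
    (hσpoly : IsPolyhedralCone σ) (hσconv : IsStronglyConvex σ)
    (Q : Finset (Fin n → ℤ)) (hQ : Q.Nonempty)
    (P : Set (Fin n → ℚ)) (hP : P = convexHull ℚ (castZ '' ↑Q) + dualCone σ) :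
    -- `S_P` is a submonoid of `M × ℤ` …
    ((castZ (0 : Fin n → ℤ) ∈ dilate (dualCone σ) P 0) ∧
      (∀ (m m' : Fin n → ℤ) (e e' : ℕ),
        castZ m ∈ dilate (dualCone σ) P e → castZ m' ∈ dilate (dualCone σ) P e' →
          castZ (m + m') ∈ dilate (dualCone σ) P (e + e'))) ∧
    -- … which is saturated
    (∀ (d : ℕ), 0 < d → ∀ (m : Fin n → ℤ) (e : ℕ),
      castZ (d • m) ∈ dilate (dualCone σ) P (d * e) → castZ m ∈ dilate (dualCone σ) P e) ∧
    -- the convex hull of `E_{[e,P]}` equals `eP` for every `e ≥ 1`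
    (∀ e : ℕ, 1 ≤ e →
      convexHull ℚ {v : Fin n → ℚ | ∃ f : Fin e → (Fin n → ℤ),
          (∀ j, castZ (f j) ∈ P) ∧ v = castZ (∑ j, f j)} = (e : ℚ) • P) := by
  have hPconv : Convex ℚ P := by
    rw [hP]; exact (convex_convexHull ℚ _).add dual_convex
  have hPω : ∀ p ∈ P, ∀ w ∈ dualCone σ, p + w ∈ P := by
    intro p hp w hw
    rw [hP] at hp ⊢
    obtain ⟨c, hc, w', hw', rfl⟩ := Set.mem_add.1 hp
    exact Set.mem_add.2 ⟨c, hc, w' + w, dual_add hw' hw, by abel⟩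
  have hQP : ∀ q ∈ Q, castZ q ∈ P := by
    intro q hq
    rw [hP]
    exact Set.mem_add.2 ⟨castZ q, subset_convexHull ℚ _ ⟨q, hq, rfl⟩, 0, dual_zero, add_zero _⟩
  have hdil : ∀ (e : ℕ), e ≠ 0 → dilate (dualCone σ) P e = (e : ℚ) • P := fun e he => if_neg he
  refine ⟨⟨?_, ?_⟩, ?_, ?_⟩
  · -- zero
    show castZ 0 ∈ dualCone σ
    have h0 : castZ (0 : Fin n → ℤ) = 0 := by funext i; simp [castZ]
    rw [h0]; exact dual_zero
  · -- addition
    intro m m' e e' hm hm'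
    rw [castZ_add]
    rcases Nat.eq_zero_or_pos e with rfl | he
    · rcases Nat.eq_zero_or_pos e' with rfl | he'
      · exact dual_add hm hm'
      · rw [hdil e' he'.ne'] at hm'
        rw [zero_add, hdil e' he'.ne']
        obtain ⟨p, hp, hpe⟩ := hm'
        simp only at hpe
        rw [← hpe]
        have he'0 : (e' : ℚ) ≠ 0 := by positivity
        refine Set.mem_smul_set.2
          ⟨p + (e' : ℚ)⁻¹ • castZ m, hPω p hp _ (dual_smul (by positivity) hm), ?_⟩
        match_scalars <;> field_simp
    · rcases Nat.eq_zero_or_pos e' with rfl | he'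
      · rw [hdil e he.ne'] at hm
        rw [add_zero, hdil e he.ne']
        obtain ⟨p, hp, hpe⟩ := hm
        simp only at hpe
        rw [← hpe]
        have he0 : (e : ℚ) ≠ 0 := by positivity
        refine Set.mem_smul_set.2
          ⟨p + (e : ℚ)⁻¹ • castZ m', hPω p hp _ (dual_smul (by positivity) hm'), ?_⟩
        match_scalars <;> field_simp
      · rw [hdil e he.ne'] at hm
        rw [hdil e' he'.ne'] at hm'
        rw [hdil _ (by positivity)]
        obtain ⟨p, hp, hpe⟩ := hm
        obtain ⟨p', hp', hpe'⟩ := hm'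
        simp only at hpe hpe'
        rw [← hpe, ← hpe']
        have hee' : (0:ℚ) < (e:ℚ) + e' := by positivity
        refine Set.mem_smul_set.2 ⟨((e:ℚ)/((e:ℚ)+e')) • p + ((e':ℚ)/((e:ℚ)+e')) • p',
          hPconv hp hp' (by positivity) (by positivity) (by field_simp), ?_⟩
        push_cast
        match_scalars <;> field_simp <;> ring
  · -- saturation
    intro d hd m e hm
    have hd0 : (d:ℚ) ≠ 0 := by positivity
    rcases Nat.eq_zero_or_pos e with rfl | he
    · simp only [Nat.mul_zero] at hm
      show castZ m ∈ dualCone σ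
      have h : castZ m = (d : ℚ)⁻¹ • castZ (d • m) := by
        rw [castZ_nsmul, smul_smul, inv_mul_cancel₀ hd0, one_smul]
      rw [h]
      exact dual_smul (by positivity) hm
    · rw [hdil _ (by positivity), castZ_nsmul] at hm
      rw [hdil _ he.ne']
      obtain ⟨p, hp, hpq⟩ := hm
      simp only [Nat.cast_mul] at hpq
      have h2 : (d:ℚ) • ((e:ℚ) • p) = (d:ℚ) • castZ m := by rw [smul_smul]; exact hpq
      exact Set.mem_smul_set.2 ⟨p, hp, smul_right_injective _ hd0 h2⟩
  · -- convex hull part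
    intro e he
    set E := {v : Fin n → ℚ | ∃ f : Fin e → (Fin n → ℤ),
        (∀ j, castZ (f j) ∈ P) ∧ v = castZ (∑ j, f j)} with hE
    have he0 : (0:ℚ) < e := by positivity
    apply le_antisymm
    · apply convexHull_min _ (hPconv.smul _)
      rintro v ⟨f, hf, rfl⟩
      rw [castZ_sum]
      refine Set.mem_smul_set.2 ⟨∑ j, ((e:ℚ)⁻¹) • castZ (f j), ?_, ?_⟩
      · apply hPconv.sum_mem (fun j _ => by positivity)
        · simp [Finset.sum_const, Finset.card_univ, he0.ne']
        · exact fun j _ => hf j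
      · rw [Finset.smul_sum]
        congr 1; funext j
        rw [smul_smul, mul_inv_cancel₀ he0.ne', one_smul]
    · rintro v hv
      obtain ⟨p, hp, hpe⟩ := Set.mem_smul_set.1 hv
      rw [hP] at hp
      obtain ⟨c, hc, w, hw, rfl⟩ := Set.mem_add.1 hp
      rw [← hpe, smul_add]
      have hW : (e:ℚ) • w ∈ dualCone σ := dual_smul he0.le hw
      set W := (e:ℚ) • w with hWdef
      have key : ∀ c ∈ convexHull ℚ (castZ '' (Q:Set (Fin n → ℤ))),
          (e:ℚ) • c + W ∈ convexHull ℚ E := by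
        apply convexHull_min
        · rintro _ ⟨q, hq, rfl⟩
          show (e:ℚ) • castZ q + W ∈ convexHull ℚ E
          obtain ⟨N, mm, hN, hmm⟩ := exists_int_multiple W
          have hN0 : (0:ℚ) < N := by exact_mod_cast hN
          have hmmω : castZ mm ∈ dualCone σ := by
            rw [hmm]; exact dual_smul hN0.le hW
          have h0e : 0 < e := he
          have hA : (e:ℚ) • castZ q ∈ E := by
            refine ⟨fun _ => q, fun _ => hQP q hq, ?_⟩
            have hs : (∑ _j : Fin e, q) = e • q := by
              simp [Finset.sum_const, Finset.card_univ]
            rw [hs, castZ_nsmul]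
          have hB : (e:ℚ) • castZ q + (N:ℚ) • W ∈ E := by
            refine ⟨fun j => if j = ⟨0, h0e⟩ then q + mm else q, fun j => ?_, ?_⟩
            · show castZ (if j = ⟨0, h0e⟩ then q + mm else q) ∈ P
              by_cases hj : j = ⟨0, h0e⟩
              · rw [if_pos hj, castZ_add]
                exact hPω _ (hQP q hq) _ hmmω
              · rw [if_neg hj]; exact hQP q hq
            · have hsum : (∑ j : Fin e, if j = ⟨0, h0e⟩ then q + mm else q)
                  = (e • q) + mm := by
                have : ∀ j : Fin e, (if j = ⟨0, h0e⟩ then q + mm else q)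
                    = q + (if j = ⟨0, h0e⟩ then mm else 0) := by
                  intro j; by_cases hj : j = ⟨0, h0e⟩ <;> simp [hj]
                rw [Finset.sum_congr rfl fun j _ => this j, Finset.sum_add_distrib,
                  Finset.sum_ite_eq' Finset.univ (⟨0, h0e⟩ : Fin e)]
                simp [Finset.sum_const, Finset.card_univ]
              rw [hsum, castZ_add, castZ_nsmul, hmm]
          have hcomb : (e:ℚ) • castZ q + W
              = (1 - (N:ℚ)⁻¹) • ((e:ℚ) • castZ q)
                + (N:ℚ)⁻¹ • ((e:ℚ) • castZ q + (N:ℚ) • W) := by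
            have hNne : (N:ℚ) ≠ 0 := hN0.ne'
            match_scalars <;> field_simp <;> ring
          rw [hcomb]
          refine (convex_convexHull ℚ E) (subset_convexHull ℚ E hA) (subset_convexHull ℚ E hB)
            ?_ (by positivity) (by ring)
          rw [sub_nonneg]
          exact inv_le_one_of_one_le₀ (by exact_mod_cast hN)
        · intro x hx y hy a b ha hb hab
          show (e:ℚ) • (a • x + b • y) + W ∈ convexHull ℚ E
          obtain rfl : b = 1 - a := by linarith
          have hcvx : (e:ℚ) • (a • x + (1-a) • y) + W
              = a • ((e:ℚ) • x + W) + (1-a) • ((e:ℚ) • y + W) := by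
            match_scalars <;> ring1
          rw [hcvx]
          exact (convex_convexHull ℚ E) hx hy ha hb hab
      exact key c hc
end

section
/- Let A be a domain (over a field) and I an ideal of A with A normal. Then the integral closure of the Rees algebra A[It] = A ⊕ ⊕_{i≥1} I^i t^i in its fraction field equals the integral closure of A[Īt], where Ī is the integral closure of I. In particular, for every i ∈ ℤ_{>0}, the integral closure of I^i equals the integral closure of Ī^i. -/
/-- `a` is integral over the ideal `I`: it satisfies an equation of integral dependence
`a^r + Σ_{i=1}^r cᵢ a^{r−i} = 0` with `cᵢ ∈ Iⁱ`. -/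
def IsIntegralOverIdeal {A : Type*} [CommRing A] (I : Ideal A) (a : A) : Prop :=
  ∃ r : ℕ, 0 < r ∧ ∃ c : ℕ → A, (∀ i, 1 ≤ i → i ≤ r → c i ∈ I ^ i) ∧
    a ^ r + ∑ i ∈ Finset.Icc 1 r, c i * a ^ (r - i) = 0

/-- The canonical embedding of the Rees algebra `A[It] ⊆ A[X]` into the fraction field of
`A[X]`. -/
noncomputable def reesToFrac {A : Type*} [CommRing A] [IsDomain A] (I : Ideal A) :
    ↥(reesAlgebra I) →+* FractionRing (Polynomial A) :=
  (algebraMap (Polynomial A) (FractionRing (Polynomial A))).comp (reesAlgebra I).subtype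

open Polynomial Finset

set_option synthInstance.maxHeartbeats 1000000
set_option maxHeartbeats 1600000

section Aux

variable {A : Type*} [CommRing A]

lemma C_mem_rees (I : Ideal A) (a : A) : (C a : A[X]) ∈ reesAlgebra I := by
  rw [← monomial_zero_left]
  exact reesAlgebra.monomial_mem.mpr (by simp)

lemma monomial_mem_rees {I : Ideal A} {n j : ℕ} {c : A} (hc : c ∈ (I ^ n) ^ j) :
    (C c * X ^ (n * j) : A[X]) ∈ reesAlgebra I := by
  rw [C_mul_X_pow_eq_monomial]
  exact reesAlgebra.monomial_mem.mpr (by rwa [pow_mul])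

/-- Forward: integral over `I^n` implies `C a * X^n` integral over the Rees algebra. -/
lemma isIntegral_rees_of_isIntegralOverIdeal (I : Ideal A) (n : ℕ) {a : A}
    (h : IsIntegralOverIdeal (I ^ n) a) :
    IsIntegral ↥(reesAlgebra I) ((C a : A[X]) * X ^ n) := by
  obtain ⟨r, hr, c, hc, he⟩ := h
  set c' : ℕ → A := fun j => if 1 ≤ j ∧ j ≤ r then c j else 0 with hc'def
  have hc' : ∀ j, c' j ∈ (I ^ n) ^ j := by
    intro j
    simp only [hc'def]
    split
    · exact hc j (by omega) (by omega)
    · exact zero_mem _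
  have he' : a ^ r + ∑ j ∈ Finset.Icc 1 r, c' j * a ^ (r - j) = 0 := by
    rw [← he]
    congr 1
    refine Finset.sum_congr rfl fun j hj => ?_
    simp only [Finset.mem_Icc] at hj
    simp [hc'def, hj.1, hj.2]
  refine ⟨X ^ r + ∑ j ∈ Finset.Icc 1 r,
      C (⟨C (c' j) * X ^ (n * j), monomial_mem_rees (hc' j)⟩ : ↥(reesAlgebra I)) * X ^ (r - j),
      ?_, ?_⟩
  · apply monic_X_pow_add
    apply lt_of_le_of_lt (degree_sum_le _ _)
    rw [Finset.sup_lt_iff (by exact_mod_cast WithBot.bot_lt_coe r)]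
    intro j hj
    simp only [Finset.mem_Icc] at hj
    calc (C (⟨C (c' j) * X ^ (n * j), monomial_mem_rees (hc' j)⟩ : ↥(reesAlgebra I)) *
        X ^ (r - j)).degree ≤ ((r - j : ℕ) : WithBot ℕ) := degree_C_mul_X_pow_le _ _
      _ < ((r : ℕ) : WithBot ℕ) := by exact_mod_cast Nat.sub_lt hr hj.1
  · have halg : ∀ y : ↥(reesAlgebra I), algebraMap ↥(reesAlgebra I) A[X] y = (y : A[X]) :=
      fun y => rfl
    simp only [eval₂_add, eval₂_pow, eval₂_X, eval₂_finset_sum, eval₂_mul, eval₂_C, halg]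
    have key : ∀ j ∈ Finset.Icc 1 r,
        (C (c' j) * X ^ (n * j) : A[X]) * (C a * X ^ n) ^ (r - j)
          = C (c' j * a ^ (r - j)) * X ^ (n * r) := by
      intro j hj
      simp only [Finset.mem_Icc] at hj
      rw [mul_pow, ← C_pow, ← pow_mul, C_mul]
      have : n * j + n * (r - j) = n * r := by
        rw [Nat.mul_sub]
        have : n * j ≤ n * r := Nat.mul_le_mul_left n hj.2
        omega
      calc C (c' j) * X ^ (n * j) * (C (a ^ (r - j)) * X ^ (n * (r - j)))
          = C (c' j) * C (a ^ (r - j)) * (X ^ (n * j) * X ^ (n * (r - j))) := by ring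
        _ = C (c' j) * C (a ^ (r - j)) * X ^ (n * r) := by rw [← pow_add, this]
    rw [Finset.sum_congr rfl key, ← Finset.sum_mul, mul_pow, ← C_pow, ← pow_mul, ← map_sum,
      ← add_mul, ← C_add, he', map_zero, zero_mul]

/-- Backward: `C a * X^n` integral over the Rees algebra implies `a` integral over `I^n`. -/
lemma isIntegralOverIdeal_of_isIntegral_rees [Nontrivial A] (I : Ideal A) (n : ℕ) {a : A}
    (h : IsIntegral ↥(reesAlgebra I) ((C a : A[X]) * X ^ n)) :
    IsIntegralOverIdeal (I ^ n) a := by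
  obtain ⟨p, hm, he⟩ := h
  set r := p.natDegree with hrdef
  have hr : 0 < r := by
    rcases Nat.eq_zero_or_pos r with h0 | h1
    · exfalso
      have hp1 : p = 1 := (hm.natDegree_eq_zero).mp h0
      rw [hp1, eval₂_one] at he
      exact one_ne_zero he
    · exact h1
  refine ⟨r, hr, fun m => (((p.coeff (r - m) : ↥(reesAlgebra I)) : A[X])).coeff (n * m),
    ?_, ?_⟩
  · intro m _ _
    rw [← pow_mul]
    exact (mem_reesAlgebra_iff _ _).mp (p.coeff (r - m)).2 (n * m)
  · rw [eval₂_eq_sum_range] at he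
    have h2 := congrArg (fun q : A[X] => q.coeff (n * r)) he
    simp only [coeff_zero, finset_sum_coeff] at h2
    have hterm : ∀ j ∈ Finset.range (r + 1),
        ((algebraMap ↥(reesAlgebra I) A[X] (p.coeff j)) * (C a * X ^ n) ^ j).coeff (n * r)
          = (((p.coeff j : ↥(reesAlgebra I)) : A[X])).coeff (n * (r - j)) * a ^ j := by
      intro j hj
      simp only [Finset.mem_range] at hj
      have hjr : j ≤ r := by omega
      have hle : n * j ≤ n * r := Nat.mul_le_mul_left n hjr
      have halg : (algebraMap ↥(reesAlgebra I) A[X] (p.coeff j))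
          = ((p.coeff j : ↥(reesAlgebra I)) : A[X]) := rfl
      rw [halg, mul_pow, ← C_pow, ← pow_mul, ← mul_assoc, coeff_mul_X_pow', if_pos hle,
        coeff_mul_C, Nat.mul_sub]
    rw [Finset.sum_congr rfl hterm, Finset.sum_range_succ] at h2
    have hlast : (((p.coeff r : ↥(reesAlgebra I)) : A[X])).coeff (n * (r - r)) * a ^ r
        = a ^ r := by
      have : p.coeff r = 1 := hm.coeff_natDegree
      rw [this]
      simp
    rw [hlast] at h2
    rw [← h2, add_comm]
    congr 1
    refine Finset.sum_bij' (fun m _ => r - m) (fun j _ => r - j) ?_ ?_ ?_ ?_ ?_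
    · intro m hm'
      simp only [Finset.mem_Icc] at hm'
      simp only [Finset.mem_range]
      omega
    · intro j hj
      simp only [Finset.mem_range] at hj
      simp only [Finset.mem_Icc]
      omega
    · intro m hm'
      simp only [Finset.mem_Icc] at hm'
      omega
    · intro j hj
      simp only [Finset.mem_range] at hj
      omega
    · intro m hm'
      simp only [Finset.mem_Icc] at hm'
      have h1 : r - (r - m) = m := by omega
      rw [h1]

/-- Every element of the Rees algebra of `J` is integral over the Rees algebra of `I`,
provided every element of `J` is integral over the ideal `I`. -/
lemma rees_int (I J : Ideal A)
    (hJI : ∀ a ∈ J, IsIntegral ↥(reesAlgebra I) ((C a : A[X]) * X ^ 1)) :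
    ∀ x ∈ reesAlgebra J, IsIntegral ↥(reesAlgebra I) x := by
  have hmon : ∀ (d : ℕ) (c : A), c ∈ J ^ d →
      ((C c : A[X]) * X ^ d) ∈ integralClosure ↥(reesAlgebra I) A[X] := by
    intro d c hc
    refine Submodule.pow_induction_on_left' (J : Submodule A A)
      (C := fun d x _ => ((C x : A[X]) * X ^ d) ∈ integralClosure ↥(reesAlgebra I) A[X])
      ?_ ?_ ?_ hc
    · intro r
      simp only [pow_zero, mul_one, Algebra.algebraMap_self, RingHom.id_apply]
      have : (C r : A[X]) = algebraMap ↥(reesAlgebra I) A[X] ⟨C r, C_mem_rees I r⟩ := rfl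
      rw [this]
      exact isIntegral_algebraMap
    · intro x y i _ _ hx hy
      rw [map_add, add_mul]
      exact add_mem hx hy
    · intro m hm i x _ hx
      have : (C (m * x) : A[X]) * X ^ (i + 1) = (C m * X ^ 1) * (C x * X ^ i) := by
        rw [C_mul]; ring
      rw [this]
      exact mul_mem (hJI m hm) hx
  intro x hx
  have h2 : (∑ d ∈ Finset.range (x.natDegree + 1), (monomial d) (x.coeff d))
      ∈ integralClosure ↥(reesAlgebra I) A[X] := by
    refine sum_mem fun d _ => ?_
    rw [← C_mul_X_pow_eq_monomial]
    exact hmon d _ ((mem_reesAlgebra_iff J x).mp hx d)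
  rwa [← x.as_sum_range] at h2

end Aux

/-- Let `A` be a normal domain over a field `k` and `I ⊆ A` an ideal with
integral closure `J = Ī`. Then the integral closure of the Rees algebra `A[It]` in its
fraction field coincides with that of `A[Jt]`; in particular the integral closures of the
ideals `Iⁱ` and `Jⁱ` coincide for all `i > 0`. -/
theorem stmt13 (k A : Type*) [Field k] [CommRing A] [IsDomain A] [Algebra k A]
    [IsIntegrallyClosed A]
    (I J : Ideal A)
    -- `J` is the integral closure of the ideal `I`
    (hJ : ∀ a : A, a ∈ J ↔ IsIntegralOverIdeal I a) :
    (∀ x : FractionRing (Polynomial A),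
      (reesToFrac I).IsIntegralElem x ↔ (reesToFrac J).IsIntegralElem x) ∧
    (∀ i : ℕ, 0 < i → ∀ a : A,
      IsIntegralOverIdeal (I ^ i) a ↔ IsIntegralOverIdeal (J ^ i) a) := by
  -- `I ≤ J`
  have hIJ : I ≤ J := by
    intro a ha
    rw [hJ]
    refine ⟨1, one_pos, fun _ => -a, ?_, by simp⟩
    intro i h1 h2
    have : i = 1 := by omega
    subst this
    simpa using I.neg_mem ha
  have hle : reesAlgebra I ≤ reesAlgebra J := by
    intro x hx
    rw [mem_reesAlgebra_iff] at hx ⊢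
    exact fun i => Ideal.pow_right_mono hIJ i (hx i)
  -- each element of `J` gives an integral element of the Rees algebra of `I`
  have hJI : ∀ a ∈ J, IsIntegral ↥(reesAlgebra I) ((Polynomial.C a : Polynomial A) * Polynomial.X ^ 1) := by
    intro a ha
    refine isIntegral_rees_of_isIntegralOverIdeal I 1 ?_
    rw [pow_one]
    exact (hJ a).mp ha
  have hreesJ : ∀ x ∈ reesAlgebra J, IsIntegral ↥(reesAlgebra I) x := rees_int I J hJI
  -- inclusion ring hom between the two Rees algebras
  let ι : ↥(reesAlgebra I) →+* ↥(reesAlgebra J) := (Subalgebra.inclusion hle).toRingHom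
  letI : Algebra ↥(reesAlgebra I) ↥(reesAlgebra J) := ι.toAlgebra
  haveI hT1 : IsScalarTower ↥(reesAlgebra I) ↥(reesAlgebra J) (Polynomial A) :=
    IsScalarTower.of_algebraMap_eq fun r => rfl
  haveI hII : Algebra.IsIntegral ↥(reesAlgebra I) ↥(reesAlgebra J) := by
    constructor
    intro s
    obtain ⟨p, hp, he⟩ := hreesJ (s : Polynomial A) s.2
    refine ⟨p, hp, ?_⟩
    have hinj : Function.Injective (reesAlgebra J).subtype := Subtype.coe_injective
    apply hinj
    rw [Polynomial.hom_eval₂, map_zero]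
    have : ((reesAlgebra J).subtype.comp
        (algebraMap ↥(reesAlgebra I) ↥(reesAlgebra J)))
        = algebraMap ↥(reesAlgebra I) (Polynomial A) := rfl
    rw [this]
    exact he
  constructor
  · -- Part 1: equality of integral closures in the fraction field
    intro x
    constructor
    · -- easy direction: `I`-integral implies `J`-integral
      rintro ⟨p, hp, he⟩
      refine ⟨p.map ι, hp.map ι, ?_⟩
      rw [Polynomial.eval₂_map]
      have : (reesToFrac J).comp ι = reesToFrac I := rfl
      rw [this]
      exact he
    · -- hard direction: use transitivity of integrality
      intro hx
      haveI : IsScalarTower ↥(reesAlgebra I) ↥(reesAlgebra J) (FractionRing (Polynomial A)) :=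
        IsScalarTower.of_algebraMap_eq fun r => rfl
      have hx' : IsIntegral ↥(reesAlgebra J) x := hx
      exact isIntegral_trans x hx'
  · -- Part 2: equality of the integral closures of the powers
    intro n _ a
    constructor
    · -- easy direction: monotonicity
      rintro ⟨r, hr, c, hc, he⟩
      exact ⟨r, hr, c, fun i h1 h2 =>
        Ideal.pow_right_mono (Ideal.pow_right_mono hIJ n) i (hc i h1 h2), he⟩
    · intro ha
      have h1 : IsIntegral ↥(reesAlgebra J) ((Polynomial.C a : Polynomial A) * Polynomial.X ^ n) :=
        isIntegral_rees_of_isIntegralOverIdeal J n ha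
      have h2 : IsIntegral ↥(reesAlgebra I) ((Polynomial.C a : Polynomial A) * Polynomial.X ^ n) :=
        isIntegral_trans _ h1
      exact isIntegralOverIdeal_of_isIntegral_rees I n h2
end

section
/- Let ∂ be a nontrivial LFIHD on a domain A and f ∈ A nonzero. Then the principal ideal (f) = fA is ∂-stable (i.e. ∂^{(i)}((f)) ⊆ (f) for all i) if and only if f ∈ ker ∂. -/
/-- A locally finite iterative higher derivation (LFIHD) on a `k`-algebra `A`: a sequence of
`k`-linear operators `D i` with `D 0 = id`, satisfying the Leibniz rule, locally finite, and
iterative. Equivalently, `f ↦ Σᵢ D i f · xⁱ` defines a `G_a`-action on `Spec A`. -/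
structure LFIHD (k A : Type*) [CommSemiring k] [CommRing A] [Algebra k A] where
  D : ℕ → A →ₗ[k] A
  D_zero : D 0 = LinearMap.id
  leibniz : ∀ (i : ℕ) (f g : A),
    D i (f * g) = ∑ j ∈ Finset.range (i + 1), D j f * D (i - j) g
  locally_finite : ∀ f : A, ∃ N : ℕ, ∀ i : ℕ, N ≤ i → D i f = 0
  iterative : ∀ (i j : ℕ) (f : A), D i (D j f) = (i + j).choose i • D (i + j) f

/-- The kernel of an LFIHD: the ring of invariants of the associated `G_a`-action. -/
def LFIHD.ker {k A : Type*} [CommSemiring k] [CommRing A] [Algebra k A]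
    (δ : LFIHD k A) : Set A :=
  {f : A | ∀ i : ℕ, 0 < i → δ.D i f = 0}

/-- An LFIHD is nontrivial if it is nonzero in some positive degree. -/
def LFIHD.IsNontrivial {k A : Type*} [CommSemiring k] [CommRing A] [Algebra k A]
    (δ : LFIHD k A) : Prop :=
  ∃ (f : A) (i : ℕ), 0 < i ∧ δ.D i f ≠ 0

open Classical in
/-- Every nonzero element has a top degree. -/
lemma LFIHD.exists_deg {k A : Type*} [CommSemiring k] [CommRing A] [Algebra k A]
    (δ : LFIHD k A) (x : A) (hx : x ≠ 0) :
    ∃ d : ℕ, δ.D d x ≠ 0 ∧ ∀ i, d < i → δ.D i x = 0 := by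
  obtain ⟨N, hN⟩ := δ.locally_finite x
  refine ⟨Nat.findGreatest (fun i => δ.D i x ≠ 0) N, ?_, ?_⟩
  · exact Nat.findGreatest_spec (P := fun i => δ.D i x ≠ 0) (m := 0) (Nat.zero_le N)
      (by simpa [δ.D_zero] using hx)
  · intro i hi
    by_cases hiN : i ≤ N
    · by_contra h
      exact absurd (Nat.findGreatest_is_greatest hi hiN) (by simpa using h)
    · exact hN i (le_of_lt (not_le.mp hiN))

lemma LFIHD.top_mul {k A : Type*} [CommSemiring k] [CommRing A] [Algebra k A]
    (δ : LFIHD k A) (x y : A) (a b : ℕ)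
    (hxa : ∀ i, a < i → δ.D i x = 0) (hyb : ∀ i, b < i → δ.D i y = 0) :
    δ.D (a + b) (x * y) = δ.D a x * δ.D b y := by
  rw [δ.leibniz, Finset.sum_eq_single a]
  · simp
  · intro j hj hja
    rcases lt_or_gt_of_ne hja with h | h
    · rw [hyb (a + b - j) (by omega), mul_zero]
    · rw [hxa _ h, zero_mul]
  · intro h
    exact absurd (Finset.mem_range.mpr (by omega)) h

/-- The kernel is factorially closed. -/
lemma LFIHD.ker_fc {k A : Type*} [CommSemiring k] [CommRing A] [IsDomain A] [Algebra k A]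
    (δ : LFIHD k A) (x y : A) (hx : x ≠ 0) (hy : y ≠ 0) (hxy : x * y ∈ δ.ker) :
    x ∈ δ.ker := by
  obtain ⟨a, ha, ha'⟩ := δ.exists_deg x hx
  obtain ⟨b, hb, hb'⟩ := δ.exists_deg y hy
  have htop : δ.D (a + b) (x * y) = δ.D a x * δ.D b y := δ.top_mul x y a b ha' hb'
  have hab : a + b = 0 := by
    by_contra h
    have := hxy (a + b) (Nat.pos_of_ne_zero h)
    rw [htop] at this
    exact mul_ne_zero ha hb this
  intro i hi
  exact ha' i (by omega)

/-- For a nontrivial LFIHD `δ` on a domain `A` and `f ∈ A` nonzero, the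
principal ideal `(f)` is `δ`-stable iff `f ∈ ker δ`. -/
theorem stmt15 (k A : Type*) [Field k] [CommRing A] [IsDomain A] [Algebra k A]
    (δ : LFIHD k A) (hnt : δ.IsNontrivial) (f : A) (hf : f ≠ 0) :
    (∀ (i : ℕ) (a : A), a ∈ Ideal.span {f} → δ.D i a ∈ Ideal.span {f}) ↔ f ∈ δ.ker := by
  constructor
  · intro hstab
    obtain ⟨d, hd, hd'⟩ := δ.exists_deg f hf
    rcases Nat.eq_zero_or_pos d with hd0 | hd0
    · intro i hi
      exact hd' i (by omega)
    · exfalso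
      have hmem : δ.D d f ∈ Ideal.span {f} := hstab d f (Ideal.mem_span_singleton_self f)
      obtain ⟨c, hc⟩ := Ideal.mem_span_singleton'.mp hmem
      have hker : c * f ∈ δ.ker := by
        intro i hi
        rw [hc, δ.iterative, hd' (i + d) (by omega)]
        simp
      have hc0 : c ≠ 0 := by
        rintro rfl
        rw [zero_mul] at hc
        exact hd hc.symm
      have : f ∈ δ.ker := δ.ker_fc f c hf hc0 (by rw [mul_comm]; exact hker)
      exact hd (this d hd0)
  · intro hker i a ha
    obtain ⟨c, hc⟩ := Ideal.mem_span_singleton'.mp ha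
    subst hc
    rw [δ.leibniz]
    apply Ideal.sum_mem
    intro j hj
    rcases Nat.eq_zero_or_pos (i - j) with h | h
    · rw [h, δ.D_zero]
      simp only [LinearMap.id_coe, id_eq]
      exact Ideal.mul_mem_left _ _ (Ideal.mem_span_singleton_self f)
    · rw [hker (i - j) h, mul_zero]
      exact Ideal.zero_mem _
end
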